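/- arXiv:2406.09232 — 5 statements merged into one kernel-verified Lean document; each statement's English description precedes it below -/
import Mathlib

section
/- Let V be a finite set, (Ω, π) a probability space, P = π^{⊗V} the product measure on Ω^V, and f ∈ L²(Ω^V, P). Let ν be a probability distribution on the subsets of V (a random subset 𝒰 independent of the configuration) with revealment δ(𝒰) := max_{v∈V} Σ_{S ∋ v} ν(S). Then Σ_{S⊆V} ν(S) · Var(E[f | F_S]) ≤ δ(𝒰) · Var(f); equivalently, E[clue(f|𝒰)] ≤ δ(𝒰). -/
open MeasureTheory ProbabilityTheory Finset

set_option linter.unusedSectionVars false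
set_option linter.unnecessarySimpa false
set_option maxHeartbeats 1000000

namespace NRSR

/-- Product of two L² functions is integrable. -/
lemma l2_mul_integrable {α : Type*} {mα : MeasurableSpace α} {μ : Measure α} {u v : α → ℝ}
    (hu : MemLp u 2 μ) (hv : MemLp v 2 μ) : Integrable (fun x => u x * v x) μ := by
  have hb : ∀ᵐ x ∂μ, ‖u x * v x‖ ≤ (1/2) * (u x ^ 2 + v x ^ 2) := by
    filter_upwards with x
    rw [Real.norm_eq_abs, abs_mul]
    nlinarith [sq_nonneg (|u x| - |v x|), abs_nonneg (u x), abs_nonneg (v x), sq_abs (u x),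
      sq_abs (v x)]
  exact Integrable.mono' ((hu.integrable_sq.add hv.integrable_sq).const_mul (1/2))
    (hu.1.mul hv.1) hb

/-- Variance only depends on the a.e. class. -/
lemma variance_congr_ae {α : Type*} {mα : MeasurableSpace α} {μ : Measure α} {u v : α → ℝ}
    (h : u =ᵐ[μ] v) : variance u μ = variance v μ := by
  unfold ProbabilityTheory.variance ProbabilityTheory.evariance
  congr 1
  have hm : μ[u] = μ[v] := integral_congr_ae h
  apply lintegral_congr_ae
  filter_upwards [h] with x hx
  rw [hx, hm]

variable {V : Type*} [Fintype V] [DecidableEq V]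
  {Ω : Type*} [MeasurableSpace Ω]

/-- The combining map: take coordinates in `S` from the first component. -/
def kap (S : Finset V) : (V → Ω) × (V → Ω) → (V → Ω) :=
  fun p v => if v ∈ S then p.1 v else p.2 v

lemma measurable_kap (S : Finset V) : Measurable (kap (Ω := Ω) S) := by
  apply measurable_pi_lambda
  intro v
  by_cases h : v ∈ S
  · simpa [kap, h, Function.comp_def] using (measurable_pi_apply v).comp measurable_fst
  · simpa [kap, h, Function.comp_def] using (measurable_pi_apply v).comp measurable_snd

variable (π : Measure Ω) [IsProbabilityMeasure π]

local notation "P" => (Measure.pi fun _ : V => π)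

lemma map_kap (S : Finset V) :
    Measure.map (kap S) ((P).prod P) = P := by
  refine (Measure.pi_eq fun s hs => ?_).symm
  rw [Measure.map_apply (measurable_kap S) (MeasurableSet.univ_pi hs)]
  have hpre : kap (Ω := Ω) S ⁻¹' (Set.univ.pi s)
      = (Set.univ.pi fun v => if v ∈ S then s v else Set.univ) ×ˢ
        (Set.univ.pi fun v => if v ∈ S then Set.univ else s v) := by
    ext p
    simp only [Set.mem_preimage, Set.mem_pi, Set.mem_univ, forall_true_left, Set.mem_prod, kap]
    constructor
    · intro h
      constructor <;> intro v <;> rcases em (v ∈ S) with hv | hv <;>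
        simpa [hv] using h v
    · rintro ⟨h1, h2⟩ v
      rcases em (v ∈ S) with hv | hv
      · simpa [hv] using h1 v
      · simpa [hv] using h2 v
  rw [hpre, Measure.prod_prod, Measure.pi_pi, Measure.pi_pi]
  calc (∏ v : V, π (if v ∈ S then s v else Set.univ)) *
        ∏ v : V, π (if v ∈ S then Set.univ else s v)
      = (∏ v : V, if v ∈ S then π (s v) else 1) *
        ∏ v : V, (if v ∈ S then 1 else π (s v)) := by
        congr 1 <;> exact Finset.prod_congr rfl fun v _ => by split <;> simp
    _ = (∏ v ∈ S, π (s v)) * ∏ v ∈ Sᶜ, π (s v) := by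
        congr 1
        · rw [Finset.prod_ite_mem Finset.univ S fun v => π (s v), Finset.univ_inter]
        · rw [Finset.prod_ite, Finset.prod_const_one, one_mul]
          refine Finset.prod_congr ?_ fun _ _ => rfl
          ext v; simp
    _ = ∏ v : V, π (s v) := Finset.prod_mul_prod_compl S fun v => π (s v)

lemma mp_kap (S : Finset V) :
    MeasurePreserving (kap S) ((P).prod P) P :=
  ⟨measurable_kap S, map_kap π S⟩

/-- Integrating out the coordinates not in `S`. -/
noncomputable def T (S : Finset V) (h : (V → Ω) → ℝ) : (V → Ω) → ℝ :=
  fun ω => ∫ y, h (kap S (ω, y)) ∂P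

lemma sm_comp_kap (S : Finset V) {h : (V → Ω) → ℝ} (hsm : StronglyMeasurable h) :
    StronglyMeasurable fun p : (V → Ω) × (V → Ω) => h (kap S p) :=
  hsm.comp_measurable (measurable_kap S)

lemma sm_T (S : Finset V) {h : (V → Ω) → ℝ} (hsm : StronglyMeasurable h) :
    StronglyMeasurable (T π S h) :=
  (sm_comp_kap S hsm).integral_prod_right'

lemma integrable_comp_kap (S : Finset V) {h : (V → Ω) → ℝ} (hsm : StronglyMeasurable h)
    (hint : Integrable h P) :
    Integrable (fun p : (V → Ω) × (V → Ω) => h (kap S p)) ((P).prod P) :=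
  ((mp_kap π S).integrable_comp hsm.aestronglyMeasurable).mpr hint

lemma integrable_T (S : Finset V) {h : (V → Ω) → ℝ} (hsm : StronglyMeasurable h)
    (hint : Integrable h P) : Integrable (T π S h) P :=
  (integrable_comp_kap π S hsm hint).integral_prod_left

/-- The sigma-algebra generated by the coordinates in `S`. -/
def mSig (S : Finset V) : MeasurableSpace (V → Ω) :=
  MeasurableSpace.comap (fun (ω : V → Ω) (u : S) => ω u) inferInstance

lemma mSig_le (S : Finset V) : mSig (Ω := Ω) S ≤ MeasurableSpace.pi := by
  have : Measurable (fun (ω : V → Ω) (u : S) => ω u) :=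
    measurable_pi_lambda _ fun u => measurable_pi_apply _
  exact measurable_iff_comap_le.mp this

lemma sm_T_mSig (S : Finset V) {h : (V → Ω) → ℝ} (hsm : StronglyMeasurable h) :
    StronglyMeasurable[mSig S] (T π S h) := by
  classical
  set r : (V → Ω) → (S → Ω) := fun ω u => ω u with hr
  set G : (S → Ω) → ℝ := fun x => ∫ y, h (fun v => if hv : v ∈ S then x ⟨v, hv⟩ else y v) ∂P
    with hG
  have hfun : ∀ ω y : V → Ω, kap S (ω, y) = fun v => if hv : v ∈ S then (r ω) ⟨v, hv⟩ else y v := by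
    intro ω y; funext v; by_cases hv : v ∈ S <;> simp [kap, hv, hr]
  have hTG : T π S h = G ∘ r := by
    funext ω
    simp only [T, Function.comp, hG, ← hfun]
  have hGsm : StronglyMeasurable G := by
    apply StronglyMeasurable.integral_prod_right'
      (f := fun p : (S → Ω) × (V → Ω) => h (fun v => if hv : v ∈ S then p.1 ⟨v, hv⟩ else p.2 v))
    apply hsm.comp_measurable
    apply measurable_pi_lambda
    intro v
    by_cases hv : v ∈ S
    · simpa [hv, Function.comp_def] using (measurable_pi_apply (⟨v, hv⟩ : S)).comp measurable_fst
    · simpa [hv, Function.comp_def] using (measurable_pi_apply v).comp measurable_snd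
  have hrm : Measurable[mSig S] r := Measurable.of_comap_le le_rfl
  rw [hTG]
  exact (hGsm.measurable.comp hrm).stronglyMeasurable

/-- `T π S h` is the conditional expectation of `h` given the coordinates in `S`. -/
lemma condexp_eq_T (S : Finset V) {h : (V → Ω) → ℝ} (hsm : StronglyMeasurable h)
    (hint : Integrable h P) :
    (P)[h | mSig S] =ᵐ[P] T π S h := by
  refine (ae_eq_condExp_of_forall_setIntegral_eq (mSig_le S) hint
    (fun s _ _ => (integrable_T π S hsm hint).integrableOn) (fun s hs _ => ?_)
    ((sm_T_mSig π S hsm).aestronglyMeasurable)).symm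
  obtain ⟨t, ht, rfl⟩ := hs
  set r : (V → Ω) → (S → Ω) := fun ω u => ω u with hr
  have hrm : Measurable r := measurable_pi_lambda _ fun u => measurable_pi_apply _
  have hsmeas : MeasurableSet (r ⁻¹' t) := hrm ht
  have hF : Integrable (fun p : (V → Ω) × (V → Ω) => h (kap S p)) ((P).prod P) :=
    integrable_comp_kap π S hsm hint
  have hpre : (r ⁻¹' t) ×ˢ (Set.univ : Set (V → Ω)) = kap S ⁻¹' (r ⁻¹' t) := by
    ext p
    simp only [Set.mem_prod, Set.mem_univ, and_true, Set.mem_preimage]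
    have : r (kap S p) = r p.1 := by
      funext u; simp [hr, kap, u.2]
    rw [this]
  have hres : Integrable (fun p : (V → Ω) × (V → Ω) => h (kap S p))
      (((P).restrict (r ⁻¹' t)).prod (P)) := by
    rw [Measure.restrict_prod_eq_prod_univ]
    exact hF.integrableOn
  calc ∫ x in r ⁻¹' t, T π S h x ∂P
      = ∫ z, h (kap S z) ∂(((P).restrict (r ⁻¹' t)).prod (P)) :=
        integral_integral (f := fun a b => h (kap S (a, b))) hres
    _ = ∫ z in (r ⁻¹' t) ×ˢ (Set.univ : Set (V → Ω)),
          h (kap S z) ∂((P).prod P) := by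
        rw [Measure.restrict_prod_eq_prod_univ]
    _ = ∫ z in kap S ⁻¹' (r ⁻¹' t), h (kap S z) ∂((P).prod P) := by rw [hpre]
    _ = ∫ x in r ⁻¹' t, h x ∂P := by
        rw [← (mp_kap π S).map_eq, setIntegral_map hsmeas ?_ (measurable_kap S).aemeasurable]
        rw [(mp_kap π S).map_eq]
        exact hsm.aestronglyMeasurable

lemma kap_comp (A B : Finset V) (ω y z : V → Ω) :
    kap A (kap B (ω, y), z) = kap (A ∩ B) (ω, kap A (y, z)) := by
  funext v
  by_cases hA : v ∈ A <;> by_cases hB : v ∈ B <;> simp [kap, hA, hB]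

/-- Semigroup property of the averaging operators. -/
lemma T_comp (A B : Finset V) {h : (V → Ω) → ℝ} (hsm : StronglyMeasurable h)
    (hint : Integrable h P) :
    T π B (T π A h) =ᵐ[P] T π (A ∩ B) h := by
  have hIAB : Integrable (fun p : (V → Ω) × (V → Ω) => h (kap (A ∩ B) p)) ((P).prod P) :=
    integrable_comp_kap π (A ∩ B) hsm hint
  filter_upwards [hIAB.prod_right_ae] with ω hω
  set H : (V → Ω) → ℝ := fun u => h (kap (A ∩ B) (ω, u)) with hH
  have hHsm : StronglyMeasurable H :=
    hsm.comp_measurable ((measurable_kap (A ∩ B)).comp (measurable_const.prodMk measurable_id))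
  have hHint : Integrable H P := hω
  have hHcomp : Integrable (fun p : (V → Ω) × (V → Ω) => H (kap A p)) ((P).prod P) :=
    ((mp_kap π A).integrable_comp hHsm.aestronglyMeasurable).mpr hHint
  calc T π B (T π A h) ω
      = ∫ y, ∫ z, H (kap A (y, z)) ∂P ∂P := by
        simp only [T, hH]
        congr 1
        funext y
        congr 1
        funext z
        rw [kap_comp]
    _ = ∫ p, H (kap A p) ∂((P).prod P) :=
        integral_integral (f := fun y z => H (kap A (y, z))) hHcomp
    _ = ∫ u, H u ∂P := by
        rw [← (mp_kap π A).map_eq,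
          integral_map (measurable_kap A).aemeasurable]
        rw [(mp_kap π A).map_eq]
        exact hHsm.aestronglyMeasurable
    _ = T π (A ∩ B) h ω := rfl

/-- `T` preserves membership in L². -/
lemma memℒp_T (S : Finset V) {h : (V → Ω) → ℝ} (hsm : StronglyMeasurable h)
    (h2 : MemLp h 2 P) : MemLp (T π S h) 2 P := by
  have hint : Integrable h P := h2.integrable one_le_two
  have hsq : Integrable (fun x => h x ^ 2) P := h2.integrable_sq
  have hsqsm : StronglyMeasurable (fun x => h x ^ 2) := hsm.pow 2
  have hTsq : Integrable (T π S (fun x => h x ^ 2)) P := integrable_T π S hsqsm hsq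
  rw [memLp_two_iff_integrable_sq (sm_T π S hsm).aestronglyMeasurable]
  refine Integrable.mono' hTsq ((sm_T π S hsm).pow 2).aestronglyMeasurable ?_
  have hIsq : Integrable (fun p : (V → Ω) × (V → Ω) => h (kap S p) ^ 2) ((P).prod P) :=
    integrable_comp_kap π S hsqsm hsq
  have hI : Integrable (fun p : (V → Ω) × (V → Ω) => h (kap S p)) ((P).prod P) :=
    integrable_comp_kap π S hsm hint
  filter_upwards [hIsq.prod_right_ae, hI.prod_right_ae] with ω hω2 hω1
  have hmem : MemLp (fun y => h (kap S (ω, y))) 2 P := by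
    rw [memLp_two_iff_integrable_sq]
    · exact hω2
    · exact (hsm.comp_measurable
        ((measurable_kap S).comp (measurable_const.prodMk measurable_id))).aestronglyMeasurable
  have hvar := variance_nonneg (fun y => h (kap S (ω, y))) P
  rw [variance_eq_sub hmem] at hvar
  have : (∫ y, h (kap S (ω, y)) ∂P) ^ 2 ≤ ∫ y, h (kap S (ω, y)) ^ 2 ∂P := by
    have h2' : (P)[(fun y => h (kap S (ω, y))) ^ 2] = ∫ y, h (kap S (ω, y)) ^ 2 ∂P := by
      congr 1
    linarith [hvar]
  simpa [T, Real.norm_eq_abs, abs_pow, sq_abs] using this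

section Main
variable {f : (V → Ω) → ℝ}

/-- Tower/commutation property for coordinate sigma-algebras of a product measure. -/
lemma condexp_condexp (hsm : StronglyMeasurable f)
    (hf2 : MemLp f 2 (Measure.pi fun _ : V => π)) (A B : Finset V) :
    (P)[(P)[f | mSig A] | mSig B] =ᵐ[P] (P)[f | mSig (A ∩ B)] := by
  have hint : Integrable f P := hf2.integrable one_le_two
  have h1 : (P)[(P)[f | mSig A] | mSig B] =ᵐ[P] (P)[T π A f | mSig B] :=
    condExp_congr_ae (condexp_eq_T π A hsm hint)
  have h2 : (P)[T π A f | mSig B] =ᵐ[P] T π B (T π A f) :=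
    condexp_eq_T π B (sm_T π A hsm) (integrable_T π A hsm hint)
  have h3 : T π B (T π A f) =ᵐ[P] T π (A ∩ B) f := T_comp π A B hsm hint
  exact ((h1.trans h2).trans h3).trans (condexp_eq_T π (A ∩ B) hsm hint).symm

/-- Conditional expectations of an L² function are in L². -/
lemma memℒp_condexp (hsm : StronglyMeasurable f)
    (hf2 : MemLp f 2 (Measure.pi fun _ : V => π)) (S : Finset V) :
    MemLp ((P)[f | mSig S]) 2 P :=
  (memℒp_T π S hsm hf2).ae_eq (condexp_eq_T π S hsm (hf2.integrable one_le_two)).symm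

/-- Pull-out helper: integrating a conditional expectation against `v` is the same as
integrating it against `E[v|m]`. -/
lemma integral_condexp_mul (m : MeasurableSpace (V → Ω)) (hm : m ≤ MeasurableSpace.pi)
    {u v : (V → Ω) → ℝ} (hPu2 : MemLp ((P)[u | m]) 2 P) (hv2 : MemLp v 2 P) :
    ∫ x, ((P)[u | m]) x * v x ∂P = ∫ x, ((P)[u | m]) x * ((P)[v | m]) x ∂P := by
  have hmul : (P)[((P)[u | m]) * v | m] =ᵐ[P] ((P)[u | m]) * ((P)[v | m]) :=
    condExp_mul_of_stronglyMeasurable_left stronglyMeasurable_condExp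
      (l2_mul_integrable hPu2 hv2) (hv2.integrable one_le_two)
  calc ∫ x, ((P)[u | m]) x * v x ∂P
      = ∫ x, ((P)[((P)[u | m]) * v | m]) x ∂P := (integral_condExp hm).symm
    _ = ∫ x, (((P)[u | m]) * ((P)[v | m])) x ∂P := integral_congr_ae hmul
    _ = ∫ x, ((P)[u | m]) x * ((P)[v | m]) x ∂P := rfl

/-- The master identity: `∫ E[f|F_B]·E[f|F_C] = ∫ f·E[f|F_{B∩C}]`. -/
lemma inner_condexp (hsm : StronglyMeasurable f)
    (hf2 : MemLp f 2 (Measure.pi fun _ : V => π)) (B C : Finset V) :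
    ∫ x, ((P)[f | mSig B]) x * ((P)[f | mSig C]) x ∂P
      = ∫ x, f x * ((P)[f | mSig (B ∩ C)]) x ∂P := by
  have hBC : MemLp ((P)[f | mSig (B ∩ C)]) 2 P := memℒp_condexp π hsm hf2 (B ∩ C)
  have hB : MemLp ((P)[f | mSig B]) 2 P := memℒp_condexp π hsm hf2 B
  have hC : MemLp ((P)[f | mSig C]) 2 P := memℒp_condexp π hsm hf2 C
  have e1 : ∫ x, ((P)[f | mSig B]) x * ((P)[f | mSig C]) x ∂P
      = ∫ x, ((P)[f | mSig B]) x * ((P)[f | mSig (B ∩ C)]) x ∂P := by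
    rw [integral_condexp_mul π (mSig B) (mSig_le B) hB hC]
    apply integral_congr_ae
    have h2 : (P)[(P)[f | mSig C] | mSig B] =ᵐ[P] (P)[f | mSig (B ∩ C)] := by
      have := condexp_condexp π hsm hf2 C B
      rwa [Finset.inter_comm C B] at this
    filter_upwards [h2] with x hx
    rw [hx]
  have key : ∀ w : (V → Ω) → ℝ, MemLp w 2 P →
      (P)[w | mSig (B ∩ C)] =ᵐ[P] (P)[f | mSig (B ∩ C)] →
      ∫ x, w x * ((P)[f | mSig (B ∩ C)]) x ∂P
        = ∫ x, ((P)[f | mSig (B ∩ C)]) x * ((P)[f | mSig (B ∩ C)]) x ∂P := by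
    intro w hw2 hw
    have comm : ∫ x, w x * ((P)[f | mSig (B ∩ C)]) x ∂P
        = ∫ x, ((P)[f | mSig (B ∩ C)]) x * w x ∂P := by
      simp [mul_comm]
    rw [comm, integral_condexp_mul π (mSig (B ∩ C)) (mSig_le (B ∩ C)) hBC hw2]
    apply integral_congr_ae
    filter_upwards [hw] with x hx
    rw [hx]
  have e2 := key ((P)[f | mSig B]) hB (by
    have := condexp_condexp π hsm hf2 B (B ∩ C)
    have hset : B ∩ (B ∩ C) = B ∩ C := by rw [← Finset.inter_assoc, Finset.inter_self]
    rwa [hset] at this)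
  have e3 := key f hf2 Filter.EventuallyEq.rfl
  rw [e1, e2, ← e3]

/-- `E[f|F_V] = f` a.e. -/
lemma condexp_univ_eq (hsm : StronglyMeasurable f)
    (hf2 : MemLp f 2 (Measure.pi fun _ : V => π)) :
    (P)[f | mSig (univ : Finset V)] =ᵐ[P] f := by
  refine (condexp_eq_T π univ hsm (hf2.integrable one_le_two)).trans ?_
  have : T π univ f = f := by
    funext ω
    have : ∀ y : V → Ω, kap (univ : Finset V) (ω, y) = ω := by
      intro y; funext v; simp [kap]
    simp [T, this]
  rw [this]

/-- `E[f|F_∅]` is the constant `∫ f` a.e. -/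
lemma condexp_empty_eq (hsm : StronglyMeasurable f)
    (hf2 : MemLp f 2 (Measure.pi fun _ : V => π)) :
    (P)[f | mSig (∅ : Finset V)] =ᵐ[P] fun _ => ∫ x, f x ∂P := by
  refine (condexp_eq_T π ∅ hsm (hf2.integrable one_le_two)).trans ?_
  have : T π ∅ f = fun _ => ∫ x, f x ∂P := by
    funext ω
    have : ∀ y : V → Ω, kap (∅ : Finset V) (ω, y) = y := by
      intro y; funext v; simp [kap]
    simp [T, this]
  rw [this]

/-- Expansion of the square of a linear combination of conditional expectations. -/
lemma integral_sq_sum (hsm : StronglyMeasurable f)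
    (hf2 : MemLp f 2 (Measure.pi fun _ : V => π))
    (mm : ℕ) (c : Fin mm → ℝ) (X : Fin mm → Finset V) :
    ∫ x, (∑ j, c j * ((P)[f | mSig (X j)]) x) ^ 2 ∂P
      = ∑ j, ∑ k, (c j * c k) * ∫ x, f x * ((P)[f | mSig (X j ∩ X k)]) x ∂P := by
  have hg : ∀ j, MemLp ((P)[f | mSig (X j)]) 2 P := fun j => memℒp_condexp π hsm hf2 (X j)
  have hint : ∀ j k : Fin mm, Integrable
      (fun x => (c j * c k) * (((P)[f | mSig (X j)]) x * ((P)[f | mSig (X k)]) x)) P :=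
    fun j k => (l2_mul_integrable (hg j) (hg k)).const_mul _
  have hexp : ∀ x : V → Ω, (∑ j, c j * ((P)[f | mSig (X j)]) x) ^ 2
      = ∑ j, ∑ k, (c j * c k) * (((P)[f | mSig (X j)]) x * ((P)[f | mSig (X k)]) x) := by
    intro x
    rw [sq, Finset.sum_mul_sum]
    exact Finset.sum_congr rfl fun j _ => Finset.sum_congr rfl fun k _ => by ring
  calc ∫ x, (∑ j, c j * ((P)[f | mSig (X j)]) x) ^ 2 ∂P
      = ∫ x, ∑ j, ∑ k, (c j * c k) *
          (((P)[f | mSig (X j)]) x * ((P)[f | mSig (X k)]) x) ∂P := by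
        apply integral_congr_ae
        filter_upwards with x
        exact hexp x
    _ = ∑ j, ∑ k, (c j * c k) * ∫ x, f x * ((P)[f | mSig (X j ∩ X k)]) x ∂P := by
        rw [integral_finset_sum _ fun j _ => integrable_finset_sum _ fun k _ => hint j k]
        refine Finset.sum_congr rfl fun j _ => ?_
        rw [integral_finset_sum _ fun k _ => hint j k]
        refine Finset.sum_congr rfl fun k _ => ?_
        rw [integral_const_mul, inner_condexp π hsm hf2 (X j) (X k)]

/-- I-difference for nested sets is an integral of a square, hence nonnegative. -/
lemma I_diff_nonneg (hsm : StronglyMeasurable f)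
    (hf2 : MemLp f 2 (Measure.pi fun _ : V => π)) {B C : Finset V} (hCB : C ⊆ B) :
    0 ≤ (∫ x, f x * ((P)[f | mSig B]) x ∂P) - ∫ x, f x * ((P)[f | mSig C]) x ∂P := by
  have h := integral_sq_sum π hsm hf2 2 ![1, -1] ![B, C]
  have hBC : B ∩ C = C := Finset.inter_eq_right.mpr hCB
  rw [Fin.sum_univ_two] at h
  simp only [Matrix.cons_val_zero, Matrix.cons_val_one, Matrix.head_cons, Fin.sum_univ_two,
    Finset.inter_self, hBC, Finset.inter_comm C B] at h
  have hnn : 0 ≤ ∫ x, (1 * ((P)[f | mSig B]) x + -1 * ((P)[f | mSig C]) x) ^ 2 ∂P :=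
    integral_nonneg fun x => sq_nonneg _
  rw [h] at hnn
  nlinarith [hnn]

/-- Key comparison: the relativized increment is dominated by the full increment. -/
lemma I_diff_le (hsm : StronglyMeasurable f)
    (hf2 : MemLp f 2 (Measure.pi fun _ : V => π)) {Pp Q B B' : Finset V}
    (h1 : Pp ∩ Q = Q) (h2 : Pp ∩ B = B) (h3 : Pp ∩ B' = B') (h4 : Q ∩ B = B')
    (h5 : Q ∩ B' = B') (h6 : B ∩ B' = B') :
    (∫ x, f x * ((P)[f | mSig B]) x ∂P) - (∫ x, f x * ((P)[f | mSig B']) x ∂P)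
      ≤ (∫ x, f x * ((P)[f | mSig Pp]) x ∂P) - ∫ x, f x * ((P)[f | mSig Q]) x ∂P := by
  have h := integral_sq_sum π hsm hf2 4 ![1, -1, -1, 1] ![Pp, Q, B, B']
  rw [Fin.sum_univ_four] at h
  simp only [Matrix.cons_val_zero, Matrix.cons_val_one, Matrix.head_cons, Fin.sum_univ_four,
    Matrix.cons_val_two, Matrix.cons_val_three, Matrix.tail_cons, Finset.inter_self,
    h1, h2, h3, h4, h5, h6, Finset.inter_comm Q Pp, Finset.inter_comm B Pp,
    Finset.inter_comm B' Pp, Finset.inter_comm B Q, Finset.inter_comm B' Q,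
    Finset.inter_comm B' B] at h
  have hnn : 0 ≤ ∫ x, (1 * ((P)[f | mSig Pp]) x + -1 * ((P)[f | mSig Q]) x
      + -1 * ((P)[f | mSig B]) x + 1 * ((P)[f | mSig B']) x) ^ 2 ∂P :=
    integral_nonneg fun x => sq_nonneg _
  rw [h] at hnn
  nlinarith [hnn]

/-- The chain of initial segments. -/
noncomputable def chain (k : ℕ) : Finset V :=
  (Finset.univ.filter fun j : Fin (Fintype.card V) => (j : ℕ) < k).image
    (Fintype.equivFin V).symm

lemma chain_zero : (chain 0 : Finset V) = ∅ := by simp [chain]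

lemma chain_card : (chain (Fintype.card V) : Finset V) = univ := by
  ext v
  simp only [chain, Finset.mem_image, Finset.mem_filter, Finset.mem_univ, true_and, iff_true]
  exact ⟨(Fintype.equivFin V) v, (Fintype.equivFin V v).isLt, Equiv.symm_apply_apply _ _⟩

lemma chain_mono (k : ℕ) : (chain k : Finset V) ⊆ chain (k + 1) :=
  Finset.image_subset_image (Finset.monotone_filter_right _ fun j _ hj => Nat.lt_succ_of_lt hj)

lemma chain_step (j : Fin (Fintype.card V)) :
    (chain ((j : ℕ) + 1) : Finset V) = insert ((Fintype.equivFin V).symm j) (chain (j : ℕ)) := by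
  ext v
  simp only [chain, Finset.mem_image, Finset.mem_filter, Finset.mem_univ, true_and,
    Finset.mem_insert]
  constructor
  · rintro ⟨i, hi, rfl⟩
    rcases Nat.lt_succ_iff_lt_or_eq.mp hi with hi' | hi'
    · exact Or.inr ⟨i, hi', rfl⟩
    · exact Or.inl (by rw [Fin.ext hi'])
  · rintro (rfl | ⟨i, hi, rfl⟩)
    · exact ⟨j, Nat.lt_succ_self _, rfl⟩
    · exact ⟨i, Nat.lt_succ_of_lt hi, rfl⟩

/-- Main inequality for strongly measurable `f`. -/
lemma main (hsm : StronglyMeasurable f) (hf2 : MemLp f 2 (Measure.pi fun _ : V => π))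
    (ν : Finset V → ℝ) (hν0 : ∀ S, 0 ≤ ν S) (δ : ℝ)
    (hδ : ∀ v : V, ∑ S ∈ Finset.univ.filter (fun S : Finset V => v ∈ S), ν S ≤ δ) :
    ∑ S : Finset V, ν S * variance ((P)[f | mSig S]) P ≤ δ * variance f P := by
  classical
  set n := Fintype.card V with hn
  set e := (Fintype.equivFin V).symm with he
  set I : Finset V → ℝ := fun B => ∫ x, f x * ((P)[f | mSig B]) x ∂P with hI
  have hIempty : I ∅ = (∫ x, f x ∂P) ^ 2 := by
    rw [hI]
    have := condexp_empty_eq π hsm hf2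
    calc ∫ x, f x * ((P)[f | mSig (∅ : Finset V)]) x ∂P
        = ∫ x, f x * (∫ y, f y ∂P) ∂P := by
          apply integral_congr_ae
          filter_upwards [this] with x hx
          rw [hx]
      _ = (∫ x, f x ∂P) ^ 2 := by rw [integral_mul_const, sq]
  have hIuniv : I univ = ∫ x, f x ^ 2 ∂P := by
    rw [hI]
    have := condexp_univ_eq π hsm hf2
    apply integral_congr_ae
    filter_upwards [this] with x hx
    rw [hx, sq]
  have hvar : ∀ S : Finset V, variance ((P)[f | mSig S]) P = I S - (∫ x, f x ∂P) ^ 2 := by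
    intro S
    rw [variance_eq_sub (memℒp_condexp π hsm hf2 S)]
    have e1 : (P)[((P)[f | mSig S]) ^ 2] = I S := by
      have h2 : ∫ x, ((P)[f | mSig S]) x * ((P)[f | mSig S]) x ∂P = I (S ∩ S) :=
        inner_condexp π hsm hf2 S S
      rw [Finset.inter_self] at h2
      rw [← h2]
      apply integral_congr_ae
      filter_upwards with x
      simp [sq]
    have e2 : (P)[(P)[f | mSig S]] = ∫ x, f x ∂P := integral_condExp (mSig_le S)
    rw [e1, e2]
  have hvarf : variance f P = I univ - (∫ x, f x ∂P) ^ 2 := by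
    rw [variance_eq_sub hf2, hIuniv]
    rfl
  have htel : ∀ S : Finset V,
      I S - (∫ x, f x ∂P) ^ 2 = ∑ k ∈ Finset.range n, (I (S ∩ chain (k+1)) - I (S ∩ chain k)) := by
    intro S
    rw [Finset.sum_range_sub (fun k => I (S ∩ chain k))]
    rw [chain_zero, chain_card, Finset.inter_univ, Finset.inter_empty, hIempty]
  have hmono : ∀ (S : Finset V) (k : ℕ), S ∩ chain k ⊆ S ∩ chain (k+1) :=
    fun S k => Finset.inter_subset_inter Finset.Subset.rfl (chain_mono k)
  have ht_nonneg : ∀ (S : Finset V) (k : ℕ),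
      0 ≤ I (S ∩ chain (k+1)) - I (S ∩ chain k) :=
    fun S k => I_diff_nonneg π hsm hf2 (hmono S k)
  have ht_le : ∀ (S : Finset V) (k : ℕ),
      I (S ∩ chain (k+1)) - I (S ∩ chain k) ≤ I (chain (k+1)) - I (chain k) := by
    intro S k
    apply I_diff_le π hsm hf2
    · exact Finset.inter_eq_right.mpr (chain_mono k)
    · exact Finset.inter_eq_right.mpr Finset.inter_subset_right
    · exact Finset.inter_eq_right.mpr
        ((Finset.inter_subset_inter Finset.Subset.rfl (chain_mono k)).trans
          Finset.inter_subset_right)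
    · ext v
      simp only [Finset.mem_inter]
      constructor
      · rintro ⟨hk, hS, _⟩; exact ⟨hS, hk⟩
      · rintro ⟨hS, hk⟩; exact ⟨hk, hS, chain_mono k hk⟩
    · ext v
      simp only [Finset.mem_inter]
      constructor
      · rintro ⟨hk, hS, _⟩; exact ⟨hS, hk⟩
      · rintro ⟨hS, hk⟩; exact ⟨hk, hS, hk⟩
    · ext v
      simp only [Finset.mem_inter]
      constructor
      · rintro ⟨⟨hS, _⟩, _, hk⟩; exact ⟨hS, hk⟩
      · rintro ⟨hS, hk⟩; exact ⟨⟨hS, chain_mono k hk⟩, hS, hk⟩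
  have ht_zero : ∀ (S : Finset V) (k : ℕ) (hk : k < n), e ⟨k, hk⟩ ∉ S →
      I (S ∩ chain (k+1)) - I (S ∩ chain k) = 0 := by
    intro S k hk hnot
    have : S ∩ chain (k+1) = S ∩ chain k := by
      have hstep := chain_step (V := V) ⟨k, hk⟩
      rw [hstep]
      ext v
      simp only [Finset.mem_inter, Finset.mem_insert]
      constructor
      · rintro ⟨hS, rfl | hv⟩
        · exact absurd hS hnot
        · exact ⟨hS, hv⟩
      · rintro ⟨hS, hv⟩; exact ⟨hS, Or.inr hv⟩
    rw [this, sub_self]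
  have hw_nonneg : ∀ k : ℕ, 0 ≤ I (chain (k+1)) - I (chain k) := fun k =>
    I_diff_nonneg π hsm hf2 (chain_mono k)
  calc ∑ S : Finset V, ν S * variance ((P)[f | mSig S]) P
      = ∑ S : Finset V, ∑ k ∈ Finset.range n,
          ν S * (I (S ∩ chain (k+1)) - I (S ∩ chain k)) := by
        refine Finset.sum_congr rfl fun S _ => ?_
        rw [hvar S, htel S, Finset.mul_sum]
    _ = ∑ k ∈ Finset.range n, ∑ S : Finset V,
          ν S * (I (S ∩ chain (k+1)) - I (S ∩ chain k)) := Finset.sum_comm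
    _ ≤ ∑ k ∈ Finset.range n, δ * (I (chain (k+1)) - I (chain k)) := by
        refine Finset.sum_le_sum fun k hk => ?_
        have hkn : k < n := Finset.mem_range.mp hk
        calc ∑ S : Finset V, ν S * (I (S ∩ chain (k+1)) - I (S ∩ chain k))
            ≤ ∑ S : Finset V,
                (if e ⟨k, hkn⟩ ∈ S then ν S * (I (chain (k+1)) - I (chain k)) else 0) := by
              refine Finset.sum_le_sum fun S _ => ?_
              by_cases hmem : e ⟨k, hkn⟩ ∈ S
              · rw [if_pos hmem]
                exact mul_le_mul_of_nonneg_left (ht_le S k) (hν0 S)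
              · rw [if_neg hmem, ht_zero S k hkn hmem, mul_zero]
          _ = (∑ S ∈ Finset.univ.filter (fun S : Finset V => e ⟨k, hkn⟩ ∈ S), ν S)
                * (I (chain (k+1)) - I (chain k)) := by
              rw [Finset.sum_filter, Finset.sum_mul]
              refine Finset.sum_congr rfl fun S _ => ?_
              split <;> simp
          _ ≤ δ * (I (chain (k+1)) - I (chain k)) :=
              mul_le_mul_of_nonneg_right (hδ _) (hw_nonneg k)
    _ = δ * variance f P := by
        rw [← Finset.mul_sum]
        congr 1
        have := htel univ
        simp only [Finset.univ_inter] at this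
        rw [hvarf, this]

/-- Main inequality, with the sigma-algebra spelled out. -/
lemma main' (hsm : StronglyMeasurable f) (hf2 : MemLp f 2 (Measure.pi fun _ : V => π))
    (ν : Finset V → ℝ) (hν0 : ∀ S, 0 ≤ ν S) (δ : ℝ)
    (hδ : ∀ v : V, ∑ S ∈ Finset.univ.filter (fun S : Finset V => v ∈ S), ν S ≤ δ) :
    ∑ S : Finset V, ν S *
        variance ((Measure.pi fun _ : V => π)[f | MeasurableSpace.comap
            (fun (ω : V → Ω) (u : S) => ω u) inferInstance]) (Measure.pi fun _ : V => π)
      ≤ δ * variance f (Measure.pi fun _ : V => π) :=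
  main π hsm hf2 ν hν0 δ hδ

end Main
end NRSR

/-- **No random sparse reconstruction for product measures.**
If `P = π^{⊗V}` is an IID product measure, `f ∈ L²(Ω^V, P)`, and `ν` is the distribution of a
random subset `𝒰 ⊆ V` (independent of the configuration) whose revealment
`max_v Σ_{S ∋ v} ν(S)` is at most `δ`, then
`Σ_S ν(S) · Var(E[f|F_S]) ≤ δ · Var(f)`, i.e. `E[clue(f|𝒰)] ≤ δ(𝒰)`. -/
theorem no_random_sparse_reconstruction_product
    {V : Type*} [Fintype V] [DecidableEq V]
    {Ω : Type*} [MeasurableSpace Ω]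
    (π : Measure Ω) [IsProbabilityMeasure π]
    (f : (V → Ω) → ℝ) (hf : MemLp f 2 (Measure.pi fun _ : V => π))
    (ν : Finset V → ℝ) (hν0 : ∀ S, 0 ≤ ν S) (hν1 : ∑ S : Finset V, ν S = 1)
    (δ : ℝ)
    (hδ : ∀ v : V, ∑ S ∈ Finset.univ.filter (fun S : Finset V => v ∈ S), ν S ≤ δ) :
    ∑ S : Finset V, ν S *
        variance ((Measure.pi fun _ : V => π)[f | MeasurableSpace.comap
            (fun (ω : V → Ω) (u : S) => ω u) inferInstance]) (Measure.pi fun _ : V => π)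
      ≤ δ * variance f (Measure.pi fun _ : V => π) := by
  classical
  have hff' : f =ᵐ[Measure.pi fun _ : V => π] hf.aestronglyMeasurable.mk f :=
    hf.aestronglyMeasurable.ae_eq_mk
  have hsm' : StronglyMeasurable (hf.aestronglyMeasurable.mk f) :=
    hf.aestronglyMeasurable.stronglyMeasurable_mk
  have hf2' : MemLp (hf.aestronglyMeasurable.mk f) 2 (Measure.pi fun _ : V => π) :=
    hf.ae_eq hff'
  have hmain := NRSR.main' π hsm' hf2' ν hν0 δ hδ
  calc ∑ S : Finset V, ν S *
        variance ((Measure.pi fun _ : V => π)[f | MeasurableSpace.comap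
            (fun (ω : V → Ω) (u : S) => ω u) inferInstance]) (Measure.pi fun _ : V => π)
      = ∑ S : Finset V, ν S *
        variance ((Measure.pi fun _ : V => π)[hf.aestronglyMeasurable.mk f |
            MeasurableSpace.comap (fun (ω : V → Ω) (u : S) => ω u) inferInstance])
          (Measure.pi fun _ : V => π) := by
        refine Finset.sum_congr rfl fun S _ => ?_
        congr 1
        exact NRSR.variance_congr_ae (condExp_congr_ae hff')
    _ ≤ δ * variance (hf.aestronglyMeasurable.mk f) (Measure.pi fun _ : V => π) := hmain
    _ = δ * variance f (Measure.pi fun _ : V => π) := by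
        congr 1
        exact NRSR.variance_congr_ae hff'.symm
end

section
/- Let V be a finite set, P a probability measure on Ω^V, and f ∈ L²(Ω^V, P). Let ν be a probability distribution on the subsets of V (a random subset 𝒰 independent of the configuration). Suppose that E[clue(f|𝒰)] = Σ_{S⊆V} ν(S)·clue(f|S) ≥ c for some c > 0, that the expected size satisfies Σ_{S⊆V} ν(S)·|S| ≤ ε²·|V|, and that 0 < ε < c/2. Then there exists a deterministic subset U ⊆ V with |U| ≤ ε·|V| and clue(f|U) > c/2. (This is the quantitative core of the equivalence between sparse reconstruction and random sparse reconstruction: a random subset of small expected size and non-vanishing expected clue yields a deterministic sparse subset with non-vanishing clue.) -/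
open MeasureTheory ProbabilityTheory Filter Finset

namespace SR

/-- The σ-algebra generated by the coordinates in `U`. -/
def coordSigma (V : Type*) (Ω : Type*) [MeasurableSpace Ω] (U : Finset V) :
    MeasurableSpace (V → Ω) :=
  MeasurableSpace.comap (fun (ω : V → Ω) (u : U) => ω u) inferInstance

/-- `clue(f|U) = Var(E[f|F_U])/Var(f)`, with the convention that it is `0` when `Var f = 0`. -/
noncomputable def clue {V : Type*} {Ω : Type*} [MeasurableSpace Ω]
    (μ : Measure (V → Ω)) (f : (V → Ω) → ℝ) (U : Finset V) : ℝ :=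
  if variance f μ = 0 then 0
  else variance (μ[f | coordSigma V Ω U]) μ / variance f μ

/-- `ν` is a probability distribution on the subsets of `V` (a random subset of `V`). -/
def IsDist {V : Type*} [Fintype V] (ν : Finset V → ℝ) : Prop :=
  (∀ S, 0 ≤ ν S) ∧ ∑ S : Finset V, ν S = 1

/-- Expected clue `E[clue(f|𝒰)]` for a random subset with distribution `ν`. -/
noncomputable def eClue {V : Type*} [Fintype V] {Ω : Type*} [MeasurableSpace Ω]
    (μ : Measure (V → Ω)) (f : (V → Ω) → ℝ) (ν : Finset V → ℝ) : ℝ :=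
  ∑ S : Finset V, ν S * clue μ f S

/-- The revealment `δ(𝒰) = max_v P[v ∈ 𝒰]` of a random subset with distribution `ν`. -/
noncomputable def revealment {V : Type*} [Fintype V] [DecidableEq V] (ν : Finset V → ℝ) : ℝ :=
  sSup (Set.range fun v : V => ∑ S ∈ Finset.univ.filter (fun S : Finset V => v ∈ S), ν S)

/-- Covariance of two real random variables. -/
noncomputable def cov {α : Type*} [MeasurableSpace α] (μ : Measure α) (f g : α → ℝ) : ℝ :=
  ∫ x, (f x - ∫ y, f y ∂μ) * (g x - ∫ y, g y ∂μ) ∂μ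

/-- Standard deviation. -/
noncomputable def sd {α : Type*} [MeasurableSpace α] (μ : Measure α) (f : α → ℝ) : ℝ :=
  Real.sqrt (variance f μ)

/-- Correlation. -/
noncomputable def corr {α : Type*} [MeasurableSpace α] (μ : Measure α) (f g : α → ℝ) : ℝ :=
  cov μ f g / (sd μ f * sd μ g)

/-- Distribution of the union of `k` independent copies of a random subset with law `ν`. -/
noncomputable def unionPow {V : Type*} [Fintype V] [DecidableEq V]
    (ν : Finset V → ℝ) (k : ℕ) : Finset V → ℝ :=
  fun W => ∑ t ∈ Finset.univ.filter (fun t : Fin k → Finset V => Finset.univ.sup t = W),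
    ∏ i, ν (t i)

end SR

open MeasureTheory ProbabilityTheory SR

lemma aux_bridge {α : Type*} {m m0 : MeasurableSpace α} (hm : m ≤ m0)
    (μ : Measure α) [IsProbabilityMeasure μ] {f : α → ℝ} (hf : MemLp f 2 μ) :
    (condExpL2 ℝ ℝ hm (hf.toLp f) : α → ℝ) =ᵐ[μ] μ[f|m] := by
  haveI := isFiniteMeasure_trim (μ := μ) hm
  refine ae_eq_condExp_of_forall_setIntegral_eq hm (hf.integrable one_le_two) ?_ ?_ ?_
  · intro s _ _
    exact (integrable_condExpL2_of_isFiniteMeasure (𝕜 := ℝ) hm).integrableOn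
  · intro s hs hμs
    rw [integral_condExpL2_eq hm (hf.toLp f) hs hμs.ne]
    exact setIntegral_congr_ae (hm s hs) ((hf.coeFn_toLp).mono fun x hx _ => hx)
  · exact aestronglyMeasurable_condExpL2 hm _

lemma aux_sq_int {α : Type*} {m0 : MeasurableSpace α} (μ : Measure α)
    (h : Lp ℝ 2 μ) : ∫ x, (h : α → ℝ) x ^ 2 ∂μ = ‖h‖ ^ 2 := by
  rw [← real_inner_self_eq_norm_sq, MeasureTheory.L2.inner_def]
  simp [RCLike.inner_apply, sq]

lemma aux_var_condexp_le {α : Type*} {m m0 : MeasurableSpace α} (hm : m ≤ m0)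
    (μ : Measure α) [IsProbabilityMeasure μ] {f : α → ℝ} (hf : MemLp f 2 μ) :
    variance (μ[f|m]) μ ≤ variance f μ := by
  haveI := isFiniteMeasure_trim (μ := μ) hm
  have hbridge := aux_bridge hm μ hf
  have hg2 : MemLp (μ[f|m]) 2 μ := (Lp.memLp _).ae_eq hbridge
  rw [variance_eq_sub hg2, variance_eq_sub hf, integral_condExp hm]
  have h1 : ∫ x, ((μ[f|m]) ^ 2) x ∂μ ≤ ∫ x, (f ^ 2) x ∂μ := by
    have e1 : ∫ x, ((μ[f|m]) ^ 2) x ∂μ = ‖(condExpL2 ℝ ℝ hm (hf.toLp f) : Lp ℝ 2 μ)‖ ^ 2 := by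
      rw [← aux_sq_int μ]
      exact integral_congr_ae (hbridge.symm.mono fun x hx => by
        simp only [Pi.pow_apply, hx])
    have e2 : ∫ x, (f ^ 2) x ∂μ = ‖hf.toLp f‖ ^ 2 := by
      rw [← aux_sq_int μ]
      exact integral_congr_ae ((hf.coeFn_toLp).symm.mono fun x hx => by
        simp only [Pi.pow_apply, hx])
    rw [e1, e2]
    have := norm_condExpL2_le (𝕜 := ℝ) (E := ℝ) hm (hf.toLp f)
    exact pow_le_pow_left₀ (norm_nonneg _) this 2
  exact sub_le_sub_right h1 _

lemma aux_coordSigma_le {V : Type*} {Ω : Type*} [MeasurableSpace Ω] (U : Finset V) :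
    SR.coordSigma V Ω U ≤ (MeasurableSpace.pi : MeasurableSpace (V → Ω)) := by
  have h : Measurable fun (ω : V → Ω) (u : U) => ω u :=
    measurable_pi_lambda _ (fun u => measurable_pi_apply _)
  exact h.comap_le

lemma aux_clue_nonneg {V : Type*} {Ω : Type*} [MeasurableSpace Ω]
    (μ : Measure (V → Ω)) (f : (V → Ω) → ℝ) (U : Finset V) : 0 ≤ SR.clue μ f U := by
  unfold SR.clue
  split
  · exact le_refl 0
  · exact div_nonneg (variance_nonneg _ _) (variance_nonneg _ _)

lemma aux_clue_le_one {V : Type*} {Ω : Type*} [MeasurableSpace Ω]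
    (μ : Measure (V → Ω)) [IsProbabilityMeasure μ] {f : (V → Ω) → ℝ}
    (hf : MemLp f 2 μ) (U : Finset V) : SR.clue μ f U ≤ 1 := by
  unfold SR.clue
  by_cases h : variance f μ = 0
  · rw [if_pos h]; exact zero_le_one
  · rw [if_neg h]
    have hpos : 0 < variance f μ := (variance_nonneg _ _).lt_of_ne (Ne.symm h)
    rw [div_le_one hpos]
    exact aux_var_condexp_le (aux_coordSigma_le U) μ hf

/-- From a random subset of small expected size and non-vanishing expected clue one can extract
a deterministic sparse subset with non-vanishing clue. -/
theorem deterministic_subset_of_expected_clue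
    {V : Type*} [Fintype V] [DecidableEq V]
    {Ω : Type*} [MeasurableSpace Ω]
    (μ : Measure (V → Ω)) [IsProbabilityMeasure μ]
    (f : (V → Ω) → ℝ) (hf : MemLp f 2 μ)
    (ν : Finset V → ℝ) (hν : IsDist ν)
    (c ε : ℝ) (hc : 0 < c)
    (hclue : c ≤ eClue μ f ν)
    (hsize : ∑ S : Finset V, ν S * (S.card : ℝ) ≤ ε ^ 2 * (Fintype.card V : ℝ))
    (hε0 : 0 < ε) (hεc : ε < c / 2) :
    ∃ U : Finset V, (U.card : ℝ) ≤ ε * (Fintype.card V : ℝ) ∧ c / 2 < clue μ f U := by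
    classical
  obtain ⟨hν0, hν1⟩ := hν
  set n : ℝ := (Fintype.card V : ℝ) with hn
  set A : Finset (Finset V) := Finset.univ.filter (fun S => c / 2 < clue μ f S) with hA
  set B : Finset (Finset V) := Finset.univ.filter (fun S => ε * n < (S.card : ℝ)) with hB
  -- expected clue upper bound via A
  have hsplit : ∑ S ∈ A, ν S + ∑ S ∈ Aᶜ, ν S = 1 := by
    rw [Finset.sum_add_sum_compl]; exact hν1
  have hAnn : 0 ≤ ∑ S ∈ A, ν S := Finset.sum_nonneg fun S _ => hν0 S
  have hCnn : 0 ≤ ∑ S ∈ Aᶜ, ν S := Finset.sum_nonneg fun S _ => hν0 S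
  have hEC : eClue μ f ν ≤ ∑ S ∈ A, ν S + (c / 2) * ∑ S ∈ Aᶜ, ν S := by
    rw [eClue, ← Finset.sum_add_sum_compl A (fun S => ν S * clue μ f S)]
    have h1 : ∑ S ∈ A, ν S * clue μ f S ≤ ∑ S ∈ A, ν S := by
      refine Finset.sum_le_sum fun S _ => ?_
      calc ν S * clue μ f S ≤ ν S * 1 :=
            mul_le_mul_of_nonneg_left (aux_clue_le_one μ hf S) (hν0 S)
        _ = ν S := mul_one _
    have h2 : ∑ S ∈ Aᶜ, ν S * clue μ f S ≤ (c / 2) * ∑ S ∈ Aᶜ, ν S := by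
      rw [Finset.mul_sum]
      refine Finset.sum_le_sum fun S hS => ?_
      have hnA : S ∉ A := Finset.mem_compl.mp hS
      simp only [hA, Finset.mem_filter, Finset.mem_univ, true_and, not_lt] at hnA
      calc ν S * clue μ f S ≤ ν S * (c / 2) :=
            mul_le_mul_of_nonneg_left hnA (hν0 S)
        _ = c / 2 * ν S := mul_comm _ _
    exact add_le_add h1 h2
  have hsumA : c / 2 ≤ ∑ S ∈ A, ν S := by
    have h1 : c ≤ ∑ S ∈ A, ν S + (c / 2) * ∑ S ∈ Aᶜ, ν S := le_trans hclue hEC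
    nlinarith [hsplit, hAnn, hCnn, hc]
  -- Markov bound on B
  have hsumB : ∑ S ∈ B, ν S ≤ ε := by
    rcases eq_or_lt_of_le (show (0:ℝ) ≤ n from Nat.cast_nonneg _) with h0 | h0
    · have hBempty : B = ∅ := by
        apply Finset.eq_empty_of_forall_notMem
        intro S hS
        simp only [hB, Finset.mem_filter, Finset.mem_univ, true_and] at hS
        have : (S.card : ℝ) ≤ ε * n := by
          rw [← h0, mul_zero]
          have : S.card ≤ Fintype.card V := Finset.card_le_card (Finset.subset_univ S)
          have h2 : Fintype.card V = 0 := by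
            have h3 := h0.symm
            rw [hn] at h3
            exact_mod_cast h3
          simp [Nat.le_zero.mp (h2 ▸ this)]
        linarith
      simp [hBempty, le_of_lt hε0]
    · have hεn : 0 < ε * n := mul_pos hε0 h0
      have key : (ε * n) * ∑ S ∈ B, ν S ≤ (ε * n) * ε := by
        calc (ε * n) * ∑ S ∈ B, ν S = ∑ S ∈ B, ν S * (ε * n) := by
              rw [Finset.mul_sum]; exact Finset.sum_congr rfl fun S _ => mul_comm _ _
          _ ≤ ∑ S ∈ B, ν S * (S.card : ℝ) := by
              gcongr with S hS
              · exact hν0 S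
              · simp only [hB, Finset.mem_filter, Finset.mem_univ, true_and] at hS
                exact le_of_lt hS
          _ ≤ ∑ S : Finset V, ν S * (S.card : ℝ) := by
              refine Finset.sum_le_sum_of_subset_of_nonneg (Finset.subset_univ B) ?_
              intro S _ _
              exact mul_nonneg (hν0 S) (Nat.cast_nonneg _)
          _ ≤ ε ^ 2 * n := hsize
          _ = (ε * n) * ε := by ring
      exact le_of_mul_le_mul_left key hεn
  -- extract a good subset
  have hdiff : 0 < ∑ S ∈ A \ B, ν S := by
    have h1 : ∑ S ∈ A ∩ B, ν S + ∑ S ∈ A \ B, ν S = ∑ S ∈ A, ν S :=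
      Finset.sum_inter_add_sum_sdiff A B ν
    have h2 : ∑ S ∈ A ∩ B, ν S ≤ ∑ S ∈ B, ν S :=
      Finset.sum_le_sum_of_subset_of_nonneg (Finset.inter_subset_right) fun S _ _ => hν0 S
    linarith
  have hne : (A \ B).Nonempty := by
    rcases (A \ B).eq_empty_or_nonempty with h | h
    · rw [h] at hdiff; simp at hdiff
    · exact h
  obtain ⟨S, hS⟩ := hne
  rw [Finset.mem_sdiff] at hS
  obtain ⟨hSA, hSB⟩ := hS
  simp only [hA, Finset.mem_filter, Finset.mem_univ, true_and] at hSA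
  simp only [hB, Finset.mem_filter, Finset.mem_univ, true_and, not_lt] at hSB
  exact ⟨S, hSB, hSA⟩
end

section
/- Let V be a finite set, P a probability measure on Ω^V, ν a probability distribution on the subsets of V (a random subset 𝒰 independent of the configuration), and (Y_S)_{S⊆V} a family of random variables such that Y_S is measurable with respect to F_S (the σ-algebra generated by the coordinates in S) and Var(Y_S) = 1 for every S ⊆ V. Let M := Σ_{S⊆V} ν(S)·Y_S and ρ := Σ_{S,T⊆V} ν(S)·ν(T)·Cov(Y_S, Y_T), which equals the mean correlation E[Corr(Y_{𝒰₁}, Y_{𝒰₂})] of two independent samples 𝒰₁, 𝒰₂ from ν and also equals Var(M). For an integer k ≥ 1, let ν^{⊕k} denote the distribution of the union 𝒰₁ ∪ ⋯ ∪ 𝒰_k of k independent copies of 𝒰. Then Σ_{W⊆V} ν^{⊕k}(W)·clue(M|W) ≥ 1 − 1/(1 + k·ρ). -/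
open MeasureTheory ProbabilityTheory Filter Finset

open MeasureTheory ProbabilityTheory SR

/-! For `t = (S₁, …, S_k)` put `Z_t = Σᵢ Y_{Sᵢ}`, which is `F_W`-measurable for `W = S₁ ∪ ⋯ ∪ S_k`.
Hence `Cov(M, Z_t) = Cov(E[M | F_W], Z_t)` and Cauchy–Schwarz gives
`Cov(M, Z_t)² ≤ clue(M | W) · Var M · Var Z_t`, where `Var M = ρ`. Averaging over `t ~ ν^k`,
`E[Cov(M, Z_t)] = kρ` and `E[Var Z_t] = k + (k² - k)ρ ≤ k(1 + kρ)`, so Cauchy–Schwarz over `t`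
yields `(kρ)² ≤ E[clue] · ρ · k(1 + kρ)`, that is `E[clue] ≥ kρ / (1 + kρ)`. -/

open Finset

namespace ProbabilityTheory

variable {Ω : Type*} {mΩ : MeasurableSpace Ω} {μ : Measure Ω} [IsProbabilityMeasure μ]
  {X Y : Ω → ℝ}

lemma covariance_sq_le_variance_mul_variance (hX : MemLp X 2 μ) (hY : MemLp Y 2 μ) :
    cov[X, Y; μ] ^ 2 ≤ Var[X; μ] * Var[Y; μ] := by
  have hquad : ∀ t : ℝ, 0 ≤ Var[Y; μ] * (t * t) + 2 * cov[X, Y; μ] * t + Var[X; μ] := by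
    intro t
    have h := variance_nonneg (X + t • Y) μ
    rw [variance_add hX (hY.const_smul t), variance_smul, covariance_smul_right] at h
    linarith
  have h := discrim_le_zero hquad
  rw [discrim] at h
  nlinarith

lemma variance_condExp_le {m : MeasurableSpace Ω} (hm : m ≤ mΩ) (hX : MemLp X 2 μ) :
    Var[μ[X | m]; μ] ≤ Var[X; μ] := by
  rw [← integral_condVar_add_variance_condExp hm hX, le_add_iff_nonneg_left]
  exact integral_nonneg_of_ae (condExp_nonneg (Eventually.of_forall fun ω => sq_nonneg _))

lemma covariance_condExp_left {m : MeasurableSpace Ω} (hm : m ≤ mΩ) (hX : MemLp X 2 μ)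
    (hY : MemLp Y 2 μ) (hYm : StronglyMeasurable[m] Y) :
    cov[μ[X | m], Y; μ] = cov[X, Y; μ] := by
  have hpull : μ[X * Y | m] =ᵐ[μ] μ[X | m] * Y :=
    condExp_mul_of_stronglyMeasurable_right hYm (hX.integrable_mul hY) (hX.integrable one_le_two)
  rw [covariance_eq_sub (hX.condExp one_le_two) hY, covariance_eq_sub hX hY,
    ← integral_congr_ae hpull, integral_condExp hm, integral_condExp hm]

end ProbabilityTheory

section ProductWeights

variable {ι α : Type*} [Fintype ι] [DecidableEq ι] [Fintype α] {ν : α → ℝ}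

lemma sum_pi_prod_mul_prod (g : ι → α → ℝ) :
    ∑ t : ι → α, (∏ l, ν (t l)) * ∏ l, g l (t l) = ∏ l, ∑ a, ν a * g l a := by
  simp_rw [← prod_mul_distrib]
  exact (Fintype.prod_sum fun l a => ν a * g l a).symm

lemma sum_pi_prod_mul_apply (hν : ∑ a, ν a = 1) (i : ι) (f : α → ℝ) :
    ∑ t : ι → α, (∏ l, ν (t l)) * f (t i) = ∑ a, ν a * f a := by
  simpa [apply_ite, hν, prod_ite_eq'] using
    sum_pi_prod_mul_prod (ν := ν) fun l a => if l = i then f a else 1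

lemma sum_pi_prod_mul_apply_mul_apply (hν : ∑ a, ν a = 1) {i j : ι} (hij : i ≠ j)
    (f g : α → ℝ) :
    ∑ t : ι → α, (∏ l, ν (t l)) * (f (t i) * g (t j))
      = (∑ a, ν a * f a) * ∑ a, ν a * g a := by
  have h := sum_pi_prod_mul_prod (ν := ν) fun l a =>
    (if l = i then f a else 1) * (if l = j then g a else 1)
  simp only [prod_mul_distrib, prod_ite_eq', mem_univ, if_true] at h
  have hfactor : ∀ l, ∑ a, ν a * ((if l = i then f a else 1) * if l = j then g a else 1)
      = (if l = i then ∑ a, ν a * f a else 1) * if l = j then ∑ a, ν a * g a else 1 := by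
    intro l
    by_cases hi : l = i <;> by_cases hj : l = j <;> simp_all
  rw [h, prod_congr rfl fun l _ => hfactor l, prod_mul_distrib]
  simp [prod_ite_eq']

lemma sum_pi_prod_mul_apply_apply (hν : ∑ a, ν a = 1) {i j : ι} (hij : i ≠ j)
    (F : α → α → ℝ) :
    ∑ t : ι → α, (∏ l, ν (t l)) * F (t i) (t j) = ∑ a, ∑ b, ν a * ν b * F a b := by
  classical
  have hF : ∀ t : ι → α, F (t i) (t j) = ∑ a, (if t i = a then 1 else 0) * F a (t j) := by
    simp
  simp_rw [hF, mul_sum]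
  rw [sum_comm]
  refine sum_congr rfl fun a _ => ?_
  have h := sum_pi_prod_mul_apply_mul_apply hν hij (fun c => if c = a then (1 : ℝ) else 0) (F a)
  rw [h]
  simp [mul_sum, mul_assoc]

lemma sum_ite_eq_card_mul_add (d r : ℝ) :
    ∑ i : ι, ∑ j : ι, (if i = j then d else r)
      = Fintype.card ι * d + ((Fintype.card ι : ℝ) ^ 2 - Fintype.card ι) * r := by
  have hsplit : ∀ i j : ι, (if i = j then d else r) = r + if i = j then d - r else 0 := by
    intro i j
    split_ifs <;> ring
  simp only [hsplit, sum_add_distrib, sum_ite_eq, mem_univ, if_true, sum_const, card_univ,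
    nsmul_eq_mul]
  ring

end ProductWeights

section WeightedSums

variable {Ω α ι : Type*} {mΩ : MeasurableSpace Ω} {μ : Measure Ω} [IsFiniteMeasure μ]
  [Fintype α] [Fintype ι] [DecidableEq ι] {ν : α → ℝ} {Y : α → Ω → ℝ}

lemma variance_fun_sum_const_mul (hY : ∀ a, MemLp (Y a) 2 μ) :
    Var[fun ω => ∑ a, ν a * Y a ω; μ] = ∑ a, ∑ b, ν a * ν b * cov[Y a, Y b; μ] := by
  have hνY : ∀ a, MemLp (fun ω => ν a * Y a ω) 2 μ := fun a => (hY a).const_mul (ν a)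
  rw [← covariance_self (memLp_finsetSum _ fun a _ => hνY a).aemeasurable,
    covariance_fun_sum_fun_sum hνY hνY]
  simp_rw [covariance_const_mul_left, covariance_const_mul_right]
  exact sum_congr rfl fun a _ => sum_congr rfl fun b _ => by ring

lemma sum_pi_prod_mul_covariance_sum (hν : ∑ a, ν a = 1) {X : Ω → ℝ} (hX : MemLp X 2 μ)
    (hY : ∀ a, MemLp (Y a) 2 μ) :
    ∑ t : ι → α, (∏ l, ν (t l)) * cov[X, fun ω => ∑ i, Y (t i) ω; μ]
      = Fintype.card ι * cov[X, fun ω => ∑ a, ν a * Y a ω; μ] := by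
  have hνY : ∀ a, MemLp (fun ω => ν a * Y a ω) 2 μ := fun a => (hY a).const_mul (ν a)
  simp_rw [covariance_fun_sum_right (fun i => hY _) hX, mul_sum]
  rw [sum_comm, covariance_fun_sum_right hνY hX]
  simp_rw [covariance_const_mul_right]
  rw [← nsmul_eq_mul, ← card_univ, ← sum_const]
  exact sum_congr rfl fun i _ => sum_pi_prod_mul_apply hν i fun a => cov[X, Y a; μ]

lemma sum_pi_prod_mul_variance_sum (hν : ∑ a, ν a = 1) (hY : ∀ a, MemLp (Y a) 2 μ) :
    ∑ t : ι → α, (∏ l, ν (t l)) * Var[fun ω => ∑ i, Y (t i) ω; μ]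
      = Fintype.card ι * ∑ a, ν a * Var[Y a; μ]
        + ((Fintype.card ι : ℝ) ^ 2 - Fintype.card ι) * ∑ a, ∑ b, ν a * ν b * cov[Y a, Y b; μ] := by
  have hcov : ∀ t : ι → α, Var[fun ω => ∑ i, Y (t i) ω; μ] = ∑ i, ∑ j, cov[Y (t i), Y (t j); μ] :=
    fun t => by
      rw [← covariance_self (memLp_finsetSum _ fun i _ => hY (t i)).aemeasurable,
        covariance_fun_sum_fun_sum (fun i => hY (t i)) (fun i => hY (t i))]
  calc ∑ t : ι → α, (∏ l, ν (t l)) * Var[fun ω => ∑ i, Y (t i) ω; μ]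
      = ∑ i, ∑ j, ∑ t : ι → α, (∏ l, ν (t l)) * cov[Y (t i), Y (t j); μ] := by
        simp_rw [hcov, mul_sum]
        rw [sum_comm]
        exact sum_congr rfl fun i _ => sum_comm
    _ = ∑ i : ι, ∑ j : ι, if i = j then ∑ a, ν a * Var[Y a; μ]
          else ∑ a, ∑ b, ν a * ν b * cov[Y a, Y b; μ] := by
        refine sum_congr rfl fun i _ => sum_congr rfl fun j _ => ?_
        split_ifs with hij
        · subst hij
          simp_rw [covariance_self (hY _).aemeasurable]
          exact sum_pi_prod_mul_apply hν i fun a => Var[Y a; μ]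
        · exact sum_pi_prod_mul_apply_apply hν hij fun a b => cov[Y a, Y b; μ]
    _ = _ := sum_ite_eq_card_mul_add _ _

end WeightedSums

lemma one_sub_one_div_le_of_sq_le {k ρ E : ℝ} (hk : 0 ≤ k) (hρ : 0 ≤ ρ) (hE : 0 ≤ E)
    (h : (k * ρ) ^ 2 ≤ E * ρ * (k + (k ^ 2 - k) * ρ)) : 1 - 1 / (1 + k * ρ) ≤ E := by
  have hpos : 0 < 1 + k * ρ := by positivity
  rw [one_sub_div hpos.ne', add_sub_cancel_left, div_le_iff₀ hpos]
  rcases (mul_nonneg hk hρ).eq_or_lt with h0 | h0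
  · rw [← h0]
    simpa using hE
  · refine le_of_mul_le_mul_left ?_ h0
    nlinarith [mul_nonneg (mul_nonneg hk hρ) (mul_nonneg hρ hE)]

namespace SR

variable {V Ω : Type*} [MeasurableSpace Ω]

lemma cov_eq_covariance {α : Type*} [MeasurableSpace α] (μ : Measure α) (f g : α → ℝ) :
    cov μ f g = covariance f g μ := rfl

lemma coordSigma_le (U : Finset V) : coordSigma V Ω U ≤ MeasurableSpace.pi :=
  measurable_iff_comap_le.mp (measurable_pi_lambda _ fun u => measurable_pi_apply (u : V))

lemma coordSigma_mono {S W : Finset V} (h : S ⊆ W) : coordSigma V Ω S ≤ coordSigma V Ω W := by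
  have hrestrict : Measurable fun (g : W → Ω) (s : S) => g ⟨s, h s.2⟩ :=
    measurable_pi_lambda _ fun s => measurable_pi_apply _
  exact measurable_iff_comap_le.mp (hrestrict.comp (comap_measurable _))

lemma clue_nonneg (μ : Measure (V → Ω)) (f : (V → Ω) → ℝ) (U : Finset V) : 0 ≤ clue μ f U := by
  unfold clue
  split_ifs
  exacts [le_rfl, div_nonneg (variance_nonneg _ _) (variance_nonneg _ _)]

variable {μ : Measure (V → Ω)} [IsProbabilityMeasure μ] {f Z : (V → Ω) → ℝ}

-- Also when `Var[f] = 0` (where `clue` is `0` by convention), as `Var[μ[f | F_U]] ≤ Var[f]`.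
lemma variance_condExp_eq_clue_mul (hf : MemLp f 2 μ) (U : Finset V) :
    Var[μ[f | coordSigma V Ω U]; μ] = clue μ f U * Var[f; μ] := by
  unfold clue
  split_ifs with h
  · rw [zero_mul]
    exact le_antisymm (h ▸ variance_condExp_le (coordSigma_le U) hf) (variance_nonneg _ _)
  · exact (div_mul_cancel₀ _ h).symm

lemma covariance_sq_le_clue_mul {U : Finset V} (hf : MemLp f 2 μ) (hZ : MemLp Z 2 μ)
    (hZU : Measurable[coordSigma V Ω U] Z) :
    cov[f, Z; μ] ^ 2 ≤ clue μ f U * Var[f; μ] * Var[Z; μ] := by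
  rw [← covariance_condExp_left (coordSigma_le U) hf hZ hZU.stronglyMeasurable,
    ← variance_condExp_eq_clue_mul hf]
  exact covariance_sq_le_variance_mul_variance (hf.condExp one_le_two) hZ

lemma sq_sum_mul_covariance_le {τ : Type*} (s : Finset τ) {w : τ → ℝ} {U : τ → Finset V}
    {Z : τ → (V → Ω) → ℝ} (hw : ∀ t ∈ s, 0 ≤ w t) (hf : MemLp f 2 μ)
    (hZ : ∀ t ∈ s, MemLp (Z t) 2 μ) (hZU : ∀ t ∈ s, Measurable[coordSigma V Ω (U t)] (Z t)) :
    (∑ t ∈ s, w t * cov[f, Z t; μ]) ^ 2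
      ≤ (∑ t ∈ s, w t * clue μ f (U t)) * Var[f; μ] * ∑ t ∈ s, w t * Var[Z t; μ] := by
  rw [sum_mul]
  refine sum_sq_le_sum_mul_sum_of_sq_le_mul _ (fun t ht => ?_) (fun t ht => ?_) fun t ht => ?_
  · exact mul_nonneg (mul_nonneg (hw t ht) (clue_nonneg _ _ _)) (variance_nonneg _ _)
  · exact mul_nonneg (hw t ht) (variance_nonneg _ _)
  · calc (w t * cov[f, Z t; μ]) ^ 2 = w t ^ 2 * cov[f, Z t; μ] ^ 2 := mul_pow _ _ _
      _ ≤ w t ^ 2 * (clue μ f (U t) * Var[f; μ] * Var[Z t; μ]) := by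
        gcongr
        exact covariance_sq_le_clue_mul hf (hZ t ht) (hZU t ht)
      _ = _ := by ring

lemma sum_unionPow_mul {V : Type*} [Fintype V] [DecidableEq V] (ν : Finset V → ℝ) (k : ℕ)
    (f : Finset V → ℝ) :
    ∑ W, unionPow ν k W * f W = ∑ t : Fin k → Finset V, (∏ l, ν (t l)) * f (univ.sup t) := by
  rw [← sum_fiberwise univ (fun t : Fin k → Finset V => univ.sup t)]
  refine sum_congr rfl fun W _ => ?_
  rw [unionPow, sum_mul]
  exact sum_congr rfl fun t ht => by rw [(mem_filter.mp ht).2]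

end SR

theorem eClue_unionPow_ge_of_mean_corr_general
    {V : Type*} [Fintype V] [DecidableEq V]
    {Ω : Type*} [MeasurableSpace Ω]
    (μ : Measure (V → Ω)) [IsProbabilityMeasure μ]
    (ν : Finset V → ℝ) (hν : IsDist ν)
    (Y : Finset V → (V → Ω) → ℝ)
    (hYmeas : ∀ S : Finset V, Measurable[coordSigma V Ω S] (Y S))
    (hYL2 : ∀ S : Finset V, MemLp (Y S) 2 μ)
    (hYvar : ∀ S : Finset V, variance (Y S) μ = 1)
    (k : ℕ) :
    1 - 1 / (1 + (k : ℝ) *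
        ∑ S : Finset V, ∑ T : Finset V, ν S * ν T * cov μ (Y S) (Y T))
      ≤ ∑ W : Finset V, unionPow ν k W *
          clue μ (fun ω => ∑ S : Finset V, ν S * Y S ω) W := by
  obtain ⟨hν0, hν1⟩ := hν
  set M := fun ω => ∑ S, ν S * Y S ω
  set ρ := ∑ S, ∑ T, ν S * ν T * cov μ (Y S) (Y T)
  set w : (Fin k → Finset V) → ℝ := fun t => ∏ l, ν (t l)
  set Z : (Fin k → Finset V) → (V → Ω) → ℝ := fun t ω => ∑ i, Y (t i) ω
  have hM : MemLp M 2 μ := memLp_finsetSum _ fun S _ => (hYL2 S).const_mul _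
  have hZ (t) : MemLp (Z t) 2 μ := memLp_finsetSum _ fun i _ => hYL2 (t i)
  have hZW (t) : Measurable[coordSigma V Ω (univ.sup t)] (Z t) :=
    Finset.measurable_fun_sum _ fun i _ =>
      (hYmeas (t i)).mono (coordSigma_mono (le_sup (mem_univ i))) le_rfl
  have hVarM : Var[M; μ] = ρ := by
    simp only [ρ, cov_eq_covariance]
    exact variance_fun_sum_const_mul hYL2
  have hρ : 0 ≤ ρ := hVarM ▸ variance_nonneg M μ
  have hcov : ∑ t, w t * cov[M, Z t; μ] = k * ρ := by
    rw [sum_pi_prod_mul_covariance_sum hν1 hM hYL2, covariance_self hM.aemeasurable, hVarM,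
      Fintype.card_fin]
  have hvar : ∑ t, w t * Var[Z t; μ] = k + (k ^ 2 - k) * ρ := by
    rw [sum_pi_prod_mul_variance_sum hν1 hYL2, ← variance_fun_sum_const_mul hYL2, hVarM]
    simp only [hYvar, mul_one, hν1, Fintype.card_fin]
  have hw (t) : 0 ≤ w t := prod_nonneg fun l _ => hν0 _
  have hCS := sq_sum_mul_covariance_le univ (fun t _ => hw t) hM (fun t _ => hZ t)
    fun t _ => hZW t
  rw [hcov, hvar, hVarM] at hCS
  rw [sum_unionPow_mul]
  exact one_sub_one_div_le_of_sq_le k.cast_nonneg hρ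
    (sum_nonneg fun t _ => mul_nonneg (hw t) (clue_nonneg _ _ _)) hCS

/-- **High average correlation implies high expected clue for the generalized magnetization**
(Lemma 3.3 of the paper). If `Y S` is `F_S`-measurable with unit variance for all `S ⊆ V`,
`M = Σ_S ν(S)·Y_S` and `ρ = Σ_{S,T} ν(S)·ν(T)·Cov(Y_S, Y_T)`, then revealing the union of `k`
independent samples from `ν` gives expected clue at least `1 − 1/(1 + k·ρ)` about `M`. -/
theorem eClue_unionPow_ge_of_mean_corr
    {V : Type*} [Fintype V] [DecidableEq V]
    {Ω : Type*} [MeasurableSpace Ω]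
    (μ : Measure (V → Ω)) [IsProbabilityMeasure μ]
    (ν : Finset V → ℝ) (hν : IsDist ν)
    (Y : Finset V → (V → Ω) → ℝ)
    (hYmeas : ∀ S : Finset V, Measurable[coordSigma V Ω S] (Y S))
    (hYL2 : ∀ S : Finset V, MemLp (Y S) 2 μ)
    (hYvar : ∀ S : Finset V, variance (Y S) μ = 1)
    (k : ℕ) (hk : 1 ≤ k) :
    1 - 1 / (1 + (k : ℝ) *
        ∑ S : Finset V, ∑ T : Finset V, ν S * ν T * cov μ (Y S) (Y T))
      ≤ ∑ W : Finset V, unionPow ν k W *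
          clue μ (fun ω => ∑ S : Finset V, ν S * Y S ω) W :=
  eClue_unionPow_ge_of_mean_corr_general μ ν hν Y hYmeas hYL2 hYvar k
end

section
/- Let X be a real random variable with E[X] = 0, standard deviation SD(X) ≥ σ for some σ > 0, and |X| ≤ C almost surely for some C > 0. Then at least one of the following two alternatives holds: either (P[X > σ/√2] ≥ σ²/(4C²) and P[X ≤ 0] ≥ min(1/2, σ³/(8√2·C³))), or (P[X < −σ/√2] ≥ σ²/(4C²) and P[X ≥ 0] ≥ min(1/2, σ³/(8√2·C³))). -/
open MeasureTheory ProbabilityTheory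

/-- One-sided step: if the upper tail `{Y > σ/√2}` has mass at least `σ²/(4C²)`,
then since `E[Y] = 0` the set `{Y ≤ 0}` must carry mass at least `σ³/(4√2 C³)`. -/
lemma one_sided_aux
    {α : Type*} [MeasurableSpace α] (μ : Measure α) [IsProbabilityMeasure μ]
    (Y : α → ℝ) (hmeas : Measurable Y) (hint : Integrable Y μ)
    (σ C : ℝ) (hσ : 0 < σ) (hC : 0 < C)
    (hmean : ∫ x, Y x ∂μ = 0)
    (hbd : ∀ᵐ x ∂μ, |Y x| ≤ C)
    (htail : σ ^ 2 / (4 * C ^ 2) ≤ (μ {x | σ / Real.sqrt 2 < Y x}).toReal) :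
    σ ^ 3 / (4 * Real.sqrt 2 * C ^ 3) ≤ (μ {x | Y x ≤ 0}).toReal := by
  have hs2 : (0:ℝ) < Real.sqrt 2 := Real.sqrt_pos.2 two_pos
  set t : ℝ := σ / Real.sqrt 2 with ht
  have htpos : 0 < t := div_pos hσ hs2
  set s : Set α := {x | t < Y x} with hs
  have hsm : MeasurableSet s := measurableSet_lt measurable_const hmeas
  set A : Set α := {x | 0 < Y x} with hA
  have hAm : MeasurableSet A := measurableSet_lt measurable_const hmeas
  have hsub : s ⊆ A := fun x hx => lt_trans htpos hx
  have hsplit : ∫ x in A, Y x ∂μ + ∫ x in Aᶜ, Y x ∂μ = 0 := by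
    rw [integral_add_compl hAm hint, hmean]
  have h1 : t * (μ s).toReal ≤ ∫ x in s, Y x ∂μ :=
    setIntegral_ge_of_const_le_real hsm (measure_ne_top μ s)
      (fun x hx => le_of_lt hx) hint.integrableOn
  have h2 : ∫ x in s, Y x ∂μ ≤ ∫ x in A, Y x ∂μ := by
    apply setIntegral_mono_set hint.integrableOn
    · exact (ae_restrict_mem hAm).mono fun x hx => le_of_lt hx
    · exact HasSubset.Subset.eventuallyLE hsub
  have h3 : (μ Aᶜ).toReal * (-C) ≤ ∫ x in Aᶜ, Y x ∂μ := by
    have hle : (fun _ : α => -C) ≤ᵐ[μ.restrict Aᶜ] Y :=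
      ae_restrict_of_ae (hbd.mono fun x h => neg_le_of_abs_le h)
    have := integral_mono_ae (integrable_const (-C)).restrict hint.integrableOn hle
    simpa [integral_const, smul_eq_mul, Measure.real] using this
  have key : t * (σ ^ 2 / (4 * C ^ 2)) ≤ C * (μ Aᶜ).toReal := by
    have e1 : t * (σ ^ 2 / (4 * C ^ 2)) ≤ t * (μ s).toReal :=
      mul_le_mul_of_nonneg_left htail htpos.le
    nlinarith [h1, h2, h3, hsplit]
  have hAc : Aᶜ = {x | Y x ≤ 0} := by
    ext x; simp [hA, not_lt]
  rw [← hAc]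
  have heq : t * (σ ^ 2 / (4 * C ^ 2)) = C * (σ ^ 3 / (4 * Real.sqrt 2 * C ^ 3)) := by
    rw [ht]; field_simp
  rw [heq] at key
  exact le_of_mul_le_mul_left key hC

/-- **Anti-concentration for bounded centered random variables** (Lemma 3.9 of the paper).
If `E[X] = 0`, `SD(X) ≥ σ > 0` and `|X| ≤ C` a.s., then either
`P[X > σ/√2] ≥ σ²/(4C²)` and `P[X ≤ 0] ≥ min(1/2, σ³/(8√2·C³))`, or the symmetric
alternative with the two tails exchanged. -/
theorem bounded_nondegenerate_two_sided
    {α : Type*} [MeasurableSpace α] (μ : Measure α) [IsProbabilityMeasure μ]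
    (X : α → ℝ) (hX : MemLp X 2 μ)
    (σ C : ℝ) (hσ : 0 < σ) (hC : 0 < C)
    (hmean : ∫ x, X x ∂μ = 0)
    (hsd : σ ≤ Real.sqrt (variance X μ))
    (hbd : ∀ᵐ x ∂μ, |X x| ≤ C) :
    (σ ^ 2 / (4 * C ^ 2) ≤ (μ {x | σ / Real.sqrt 2 < X x}).toReal ∧
      min (1 / 2) (σ ^ 3 / (8 * Real.sqrt 2 * C ^ 3)) ≤ (μ {x | X x ≤ 0}).toReal) ∨
    (σ ^ 2 / (4 * C ^ 2) ≤ (μ {x | X x < -(σ / Real.sqrt 2)}).toReal ∧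
      min (1 / 2) (σ ^ 3 / (8 * Real.sqrt 2 * C ^ 3)) ≤ (μ {x | 0 ≤ X x}).toReal) := by
  have hs2 : (0:ℝ) < Real.sqrt 2 := Real.sqrt_pos.2 two_pos
  set t : ℝ := σ / Real.sqrt 2 with ht
  have htpos : 0 < t := div_pos hσ hs2
  -- measurable representative
  set Y : α → ℝ := hX.1.mk X with hY
  have hYmeas : Measurable Y := hX.1.stronglyMeasurable_mk.measurable
  have hXY : X =ᵐ[μ] Y := hX.1.ae_eq_mk
  have hintX : Integrable X μ := hX.integrable one_le_two
  have hintY : Integrable Y μ := hintX.congr hXY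
  have hmeanY : ∫ x, Y x ∂μ = 0 := by
    rw [← integral_congr_ae hXY, hmean]
  have hbdY : ∀ᵐ x ∂μ, |Y x| ≤ C := by
    filter_upwards [hbd, hXY] with x h1 h2
    rwa [← h2]
  have hint2Y : Integrable (fun x => Y x ^ 2) μ := by
    have := hX.integrable_sq
    exact this.congr (hXY.mono fun x hx => by simp [hx])
  -- second moment lower bound
  have hsqX : σ ^ 2 ≤ ∫ x, X x ^ 2 ∂μ := by
    have hvar : variance X μ = ∫ x, X x ^ 2 ∂μ := by
      rw [variance_eq_sub hX]
      simp [Pi.pow_apply, hmean]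
    have h := mul_le_mul hsd hsd hσ.le (Real.sqrt_nonneg _)
    rw [Real.mul_self_sqrt (variance_nonneg X μ)] at h
    nlinarith
  have hsqY : σ ^ 2 ≤ ∫ x, Y x ^ 2 ∂μ := by
    rwa [integral_congr_ae (hXY.mono fun x hx => by rw [hx])] at hsqX
  -- tail bound for |Y|
  set s : Set α := {x | t < |Y x|} with hsdef
  have hsm : MeasurableSet s := measurableSet_lt measurable_const hYmeas.abs
  have htail : σ ^ 2 / (2 * C ^ 2) ≤ (μ s).toReal := by
    have hsplit : ∫ x in s, Y x ^ 2 ∂μ + ∫ x in sᶜ, Y x ^ 2 ∂μ = ∫ x, Y x ^ 2 ∂μ :=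
      integral_add_compl hsm hint2Y
    have hub : ∫ x in s, Y x ^ 2 ∂μ ≤ C ^ 2 * (μ s).toReal := by
      have hle : Y ^ 2 ≤ᵐ[μ.restrict s] fun _ => C ^ 2 := by
        apply ae_restrict_of_ae
        filter_upwards [hbdY] with x h
        calc Y x ^ 2 = |Y x| ^ 2 := (sq_abs _).symm
          _ ≤ C ^ 2 := pow_le_pow_left₀ (abs_nonneg _) h 2
      have := integral_mono_ae hint2Y.integrableOn
        (integrable_const (C ^ 2)).restrict hle
      simpa [integral_const, smul_eq_mul, mul_comm, Measure.real] using this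
    have hub2 : ∫ x in sᶜ, Y x ^ 2 ∂μ ≤ t ^ 2 := by
      have hle : Y ^ 2 ≤ᵐ[μ.restrict sᶜ] fun _ => t ^ 2 := by
        refine (ae_restrict_mem hsm.compl).mono fun x hx => ?_
        have hx' : |Y x| ≤ t := not_lt.1 hx
        calc Y x ^ 2 = |Y x| ^ 2 := (sq_abs _).symm
          _ ≤ t ^ 2 := pow_le_pow_left₀ (abs_nonneg _) hx' 2
      have h4 := integral_mono_ae hint2Y.integrableOn
        (integrable_const (t ^ 2)).restrict hle
      have h5 : (μ sᶜ).toReal ≤ 1 := by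
        have := measure_mono (Set.subset_univ sᶜ) (μ := μ)
        rw [measure_univ] at this
        exact (ENNReal.toReal_le_toReal (measure_ne_top μ _) ENNReal.one_ne_top).2 this
      have h6 : (μ sᶜ).toReal * t ^ 2 ≤ t ^ 2 := by nlinarith
      calc ∫ x in sᶜ, Y x ^ 2 ∂μ ≤ (μ sᶜ).toReal * t ^ 2 := by
            simpa [integral_const, smul_eq_mul, Measure.real] using h4
        _ ≤ t ^ 2 := h6
    have ht2 : t ^ 2 = σ ^ 2 / 2 := by
      rw [ht, div_pow, Real.sq_sqrt (by norm_num : (2:ℝ) ≥ 0)]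
    have hσ2 : σ ^ 2 ≤ C ^ 2 * (μ s).toReal + σ ^ 2 / 2 := by
      rw [← ht2]; nlinarith
    rw [div_le_iff₀ (by positivity)]
    nlinarith
  -- split the two-sided tail
  have hsumeq : s = {x | t < Y x} ∪ {x | Y x < -t} := by
    ext x
    simp only [hsdef, Set.mem_setOf_eq, Set.mem_union, lt_abs]
    exact or_congr Iff.rfl (by constructor <;> intro h <;> linarith)
  have hsum : (μ s).toReal ≤ (μ {x | t < Y x}).toReal + (μ {x | Y x < -t}).toReal := by
    rw [← ENNReal.toReal_add (measure_ne_top μ _) (measure_ne_top μ _)]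
    refine ENNReal.toReal_mono (ENNReal.add_ne_top.2 ⟨measure_ne_top μ _, measure_ne_top μ _⟩) ?_
    rw [hsumeq]
    exact measure_union_le _ _
  -- transfer of sets between X and Y
  have eset : ∀ S : Set ℝ, μ {x | X x ∈ S} = μ {x | Y x ∈ S} := fun S =>
    measure_congr (hXY.mono fun x hx => by show (X x ∈ S) = (Y x ∈ S); rw [hx])
  have e1 : μ {x | t < X x} = μ {x | t < Y x} := eset {y | t < y}
  have e2 : μ {x | X x ≤ 0} = μ {x | Y x ≤ 0} := eset {y | y ≤ 0}
  have e3 : μ {x | X x < -t} = μ {x | Y x < -t} := eset {y | y < -t}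
  have e4 : μ {x | 0 ≤ X x} = μ {x | 0 ≤ Y x} := eset {y | 0 ≤ y}
  have hmin : ∀ r : ℝ, σ ^ 3 / (4 * Real.sqrt 2 * C ^ 3) ≤ r →
      min (1 / 2) (σ ^ 3 / (8 * Real.sqrt 2 * C ^ 3)) ≤ r := by
    intro r hr
    refine le_trans (min_le_right _ _) (le_trans ?_ hr)
    have h48 : 4 * Real.sqrt 2 * C ^ 3 ≤ 8 * Real.sqrt 2 * C ^ 3 := by
      nlinarith [pow_pos hC 3]
    gcongr
  rcases le_or_gt (σ ^ 2 / (4 * C ^ 2)) ((μ {x | t < Y x}).toReal) with hcase | hcase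
  · left
    constructor
    · rw [e1]; exact hcase
    · rw [e2]
      exact hmin _ (one_sided_aux μ Y hYmeas hintY σ C hσ hC hmeanY hbdY hcase)
  · right
    have hcase2 : σ ^ 2 / (4 * C ^ 2) ≤ (μ {x | Y x < -t}).toReal := by
      have hhalf : σ ^ 2 / (2 * C ^ 2) = σ ^ 2 / (4 * C ^ 2) + σ ^ 2 / (4 * C ^ 2) := by
        field_simp; ring
      linarith
    constructor
    · rw [e3]; exact hcase2
    · have hneg := one_sided_aux μ (fun x => -Y x) hYmeas.neg hintY.neg σ C hσ hC
        (by rw [integral_neg, hmeanY, neg_zero])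
        (by filter_upwards [hbdY] with x h; rwa [abs_neg])
        (by
          have : {x | t < -Y x} = {x | Y x < -t} := by
            ext x; simp only [Set.mem_setOf_eq]; constructor <;> intro h <;> linarith
          rw [this]; exact hcase2)
      have hset : {x | -Y x ≤ 0} = {x | 0 ≤ Y x} := by
        ext x; simp only [Set.mem_setOf_eq, neg_nonpos]
      rw [hset] at hneg
      rw [e4]
      exact hmin _ hneg
end

section
/- Let V be a finite set and (σ_v)_{v∈V} random variables taking values in finite sets, defined on a common probability space, and suppose H(σ_V) ≥ Σ_{v∈V} H(σ_v) − C for some constant C ≥ 0, where σ_V denotes the joint vector and H is base-2 Shannon entropy. Let ν be a probability distribution on the subsets of V (a random subset 𝒰 independent of σ_V) with revealment δ := max_{v∈V} Σ_{S ∋ v} ν(S). Then for every function f of σ_V taking finitely many values, writing Z := f(σ_V) and assuming H(Z) > 0, one has Σ_{U⊆V} ν(U)·I(Z : σ_U) ≤ δ·(H(Z) + C), where σ_U := (σ_v)_{v∈U}; equivalently, the expected information-theoretic clue satisfies E[clue^I(f|𝒰)] ≤ δ·(1 + C/H(Z)). -/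
set_option maxHeartbeats 2000000


open Finset

namespace SR

/-- `p` is a probability mass function on the finite type `A`. -/
def IsPMF {A : Type*} [Fintype A] (p : A → ℝ) : Prop :=
  (∀ x, 0 ≤ p x) ∧ ∑ x : A, p x = 1

open scoped Classical in
/-- Base-2 Shannon entropy of the random variable `X` on the finite probability space `(A, p)`.
(Note `Real.logb 2 0 = 0`, so the `0·log 0 = 0` convention holds automatically.) -/
noncomputable def ent {A : Type*} [Fintype A] {β : Type*} [Fintype β]
    (p : A → ℝ) (X : A → β) : ℝ :=
  - ∑ b : β, (∑ a ∈ univ.filter (fun a => X a = b), p a) *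
      Real.logb 2 (∑ a ∈ univ.filter (fun a => X a = b), p a)

/-- Mutual information `I(X : Y) = H(X) + H(Y) − H(X,Y)`. -/
noncomputable def minfo {A : Type*} [Fintype A] {β γ : Type*} [Fintype β] [Fintype γ]
    (p : A → ℝ) (X : A → β) (Y : A → γ) : ℝ :=
  ent p X + ent p Y - ent p fun a => (X a, Y a)

end SR

open SR

namespace SRAux

open scoped Classical

variable {A : Type*} [Fintype A] {p : A → ℝ}

/-- pushforward mass -/
noncomputable def pm {A : Type*} [Fintype A] {β : Type*} (p : A → ℝ) (X : A → β) (b : β) : ℝ :=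
  ∑ a ∈ univ.filter (fun a => X a = b), p a

lemma ent_def {β : Type*} [Fintype β] (X : A → β) :
    ent p X = - ∑ b : β, pm p X b * Real.logb 2 (pm p X b) := rfl

lemma pm_nonneg (hp : ∀ a, 0 ≤ p a) {β : Type*} (X : A → β) (b : β) : 0 ≤ pm p X b :=
  sum_nonneg fun a _ => hp a

lemma sum_pm {β : Type*} [Fintype β] (X : A → β) : ∑ b : β, pm p X b = ∑ a : A, p a := by
  classical
  exact Finset.sum_fiberwise univ X p

lemma pm_le (hp : ∀ a, 0 ≤ p a) {β γ : Type*} (X : A → β) (Y : A → γ)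
    (F : β → γ) (hF : ∀ a, Y a = F (X a)) (b : β) : pm p X b ≤ pm p Y (F b) := by
  classical
  apply Finset.sum_le_sum_of_subset_of_nonneg
  · intro a ha
    simp only [mem_filter, mem_univ, true_and] at ha ⊢
    rw [hF, ha]
  · intro a _ _; exact hp a

lemma pm_marg {β κ : Type*} [Fintype β] (X : A → β) (Y : A → κ)
    (F : β → κ) (hF : ∀ a, Y a = F (X a)) (c : κ) :
    pm p Y c = ∑ b ∈ univ.filter (fun b => F b = c), pm p X b := by
  classical
  unfold pm
  have hite : ∀ (P : Prop) [Decidable P] (g : A → ℝ),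
      (if P then ∑ a : A, g a else 0) = ∑ a : A, if P then g a else 0 := by
    intro P _ g; split <;> simp
  simp_rw [Finset.sum_filter, hite]
  rw [Finset.sum_comm]
  apply Finset.sum_congr rfl
  intro a _
  have : ∀ b : β, (if F b = c then if X a = b then p a else 0 else 0)
      = if b = X a then (if F b = c then p a else 0) else 0 := by
    intro b
    by_cases h2 : X a = b
    · subst h2; simp
    · have h2' : ¬ b = X a := fun h => h2 h.symm
      simp [h2, h2']
  simp_rw [this, Finset.sum_ite_eq' univ (X a) (fun b => if F b = c then p a else 0),
    mem_univ, if_true, hF a]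


lemma pm_map {β γ : Type*} (X : A → β) (Y : A → γ)
    (g : β → γ) (hg : Function.Injective g) (hXY : ∀ a, Y a = g (X a)) (b : β) :
    pm p Y (g b) = pm p X b := by
  unfold pm
  apply Finset.sum_congr
  · ext a; simp [hXY a, hg.eq_iff]
  · intros; rfl

lemma pm_fiber_sum {β κ : Type*} [Fintype κ] (X : A → β) (Y : A → κ) (b : β) :
    pm p X b = ∑ c : κ, pm p (fun a => (X a, Y a)) (b, c) := by
  unfold pm
  have hite : ∀ (P : Prop) [Decidable P] (g : A → ℝ),
      (if P then ∑ a : A, g a else 0) = ∑ a : A, if P then g a else 0 := by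
    intro P _ g; split <;> simp
  simp_rw [Finset.sum_filter]
  rw [Finset.sum_comm]
  apply Finset.sum_congr rfl
  intro a _
  by_cases h : X a = b
  · simp only [Prod.mk.injEq, h, true_and]
    rw [Finset.sum_ite_eq univ (Y a) (fun _ => p a)]
    simp [h]
  · simp [Prod.mk.injEq, h]

end SRAux

namespace SRAux2
open SRAux

/-- Gibbs' inequality. -/
lemma gibbs {ι : Type*} [Fintype ι] (P Q : ι → ℝ) (hP : ∀ i, 0 ≤ P i) (hQ : ∀ i, 0 ≤ Q i)
    (hPQ : ∀ i, Q i = 0 → P i = 0) (hsum : ∑ i, Q i ≤ ∑ i, P i) :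
    ∑ i, P i * Real.logb 2 (Q i) ≤ ∑ i, P i * Real.logb 2 (P i) := by
  have hlog2 : (0:ℝ) < Real.log 2 := Real.log_pos (by norm_num)
  have key : ∀ i, P i * Real.logb 2 (Q i) ≤
      P i * Real.logb 2 (P i) + (Q i - P i) * (Real.log 2)⁻¹ := by
    intro i
    rcases eq_or_lt_of_le (hP i) with h0 | h0
    · rw [← h0]; simp
      exact mul_nonneg (hQ i) (by positivity)
    · have hQi : 0 < Q i := lt_of_le_of_ne (hQ i) (fun h => by
        have := hPQ i h.symm; linarith)
      have hd : 0 < Q i / P i := div_pos hQi h0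
      have hlog := Real.log_le_sub_one_of_pos hd
      have : P i * Real.log (Q i / P i) ≤ Q i - P i := by
        have := mul_le_mul_of_nonneg_left hlog (le_of_lt h0)
        calc P i * Real.log (Q i / P i) ≤ P i * (Q i / P i - 1) := this
          _ = Q i - P i := by field_simp
      have h2 : P i * Real.log (Q i / P i) * (Real.log 2)⁻¹ ≤ (Q i - P i) * (Real.log 2)⁻¹ :=
        mul_le_mul_of_nonneg_right this (by positivity)
      rw [Real.log_div (ne_of_gt hQi) (ne_of_gt h0), mul_sub, sub_mul] at h2
      simp only [Real.logb, div_eq_mul_inv]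
      linarith [h2]
  calc ∑ i, P i * Real.logb 2 (Q i)
      ≤ ∑ i, (P i * Real.logb 2 (P i) + (Q i - P i) * (Real.log 2)⁻¹) :=
        Finset.sum_le_sum (fun i _ => key i)
    _ = ∑ i, P i * Real.logb 2 (P i) + (∑ i, Q i - ∑ i, P i) * (Real.log 2)⁻¹ := by
        rw [Finset.sum_add_distrib, ← Finset.sum_mul, Finset.sum_sub_distrib]
    _ ≤ ∑ i, P i * Real.logb 2 (P i) := by
        have : (∑ i, Q i - ∑ i, P i) * (Real.log 2)⁻¹ ≤ 0 :=
          mul_nonpos_of_nonpos_of_nonneg (by linarith) (by positivity)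
        linarith

end SRAux2

namespace SRAux

open SRAux2
open scoped Classical

variable {A : Type*} [Fintype A] {p : A → ℝ}

lemma ent_congr_inj {β γ : Type*} [Fintype β] [Fintype γ] (X : A → β) (Y : A → γ)
    (g : β → γ) (hg : Function.Injective g) (hXY : ∀ a, Y a = g (X a)) :
    ent p Y = ent p X := by
  rw [ent_def, ent_def]
  congr 1
  have hpm : ∀ b : β, pm p Y (g b) = pm p X b := by
    intro b
    unfold pm
    apply Finset.sum_congr
    · ext a; simp [hXY a, hg.eq_iff]
    · intros; rfl
  have h0 : ∀ c : γ, c ∉ univ.image g → pm p Y c = 0 := by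
    intro c hc
    unfold pm
    apply Finset.sum_eq_zero
    intro a ha
    exfalso
    apply hc
    simp only [mem_filter, mem_univ, true_and] at ha
    simp only [mem_image, mem_univ, true_and]
    exact ⟨X a, by rw [← hXY a, ha]⟩
  rw [← Finset.sum_subset (Finset.subset_univ (univ.image g))
      (fun c _ hc => by rw [h0 c hc]; simp)]
  rw [Finset.sum_image (fun b _ b' _ h => hg h)]
  exact Finset.sum_congr rfl fun b _ => by rw [hpm b]

lemma ent_const {β : Type*} [Fintype β] (hp : IsPMF p) (c : β) :
    ent p (fun _ : A => c) = 0 := by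
  rw [ent_def, neg_eq_zero]
  apply Finset.sum_eq_zero
  intro b _
  by_cases h : c = b
  · have : pm p (fun _ : A => c) b = 1 := by
      unfold pm
      rw [Finset.filter_true_of_mem (fun a _ => h), hp.2]
    rw [this]; simp
  · have : pm p (fun _ : A => c) b = 0 := by
      unfold pm
      rw [Finset.filter_false_of_mem (fun a _ => h)]; simp
    rw [this]; simp

/-- Submodularity of entropy. -/
lemma submod3 (hp : IsPMF p) {β γ ω : Type*} [Fintype β] [Fintype γ] [Fintype ω]
    (X : A → β) (Y : A → γ) (W : A → ω) :
    ent p (fun a => (X a, Y a, W a)) + ent p W ≤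
      ent p (fun a => (X a, W a)) + ent p (fun a => (Y a, W a)) := by
  set m : β × γ × ω → ℝ := pm p (fun a => (X a, Y a, W a)) with hm
  set mXW : β × ω → ℝ := pm p (fun a => (X a, W a)) with hmXW
  set mYW : γ × ω → ℝ := pm p (fun a => (Y a, W a)) with hmYW
  set mW : ω → ℝ := pm p W with hmW
  have hm0 : ∀ t, 0 ≤ m t := fun t => pm_nonneg hp.1 _ t
  have hXW0 : ∀ t, 0 ≤ mXW t := fun t => pm_nonneg hp.1 _ t
  have hYW0 : ∀ t, 0 ≤ mYW t := fun t => pm_nonneg hp.1 _ t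
  have hW0 : ∀ t, 0 ≤ mW t := fun t => pm_nonneg hp.1 _ t
  -- marginal identities
  have hXWm : ∀ b d, mXW (b, d) = ∑ c : γ, m (b, c, d) := by
    intro b d
    rw [hmXW, pm_fiber_sum (p := p) (fun a => (X a, W a)) Y (b, d)]
    apply Finset.sum_congr rfl
    intro c _
    exact pm_map (fun a => (X a, Y a, W a)) (fun a => ((X a, W a), Y a))
      (fun t => ((t.1, t.2.2), t.2.1))
      (fun t t' h => by
        simp only [Prod.ext_iff] at h ⊢; tauto)
      (fun a => rfl) (b, c, d)
  have hYWm : ∀ c d, mYW (c, d) = ∑ b : β, m (b, c, d) := by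
    intro c d
    rw [hmYW, pm_fiber_sum (p := p) (fun a => (Y a, W a)) X (c, d)]
    apply Finset.sum_congr rfl
    intro b _
    exact pm_map (fun a => (X a, Y a, W a)) (fun a => ((Y a, W a), X a))
      (fun t => ((t.2.1, t.2.2), t.1))
      (fun t t' h => by
        simp only [Prod.ext_iff] at h ⊢; tauto)
      (fun a => rfl) (b, c, d)
  have hWm : ∀ d, mW d = ∑ b : β, ∑ c : γ, m (b, c, d) := by
    intro d
    rw [hmW, pm_fiber_sum (p := p) W (fun a => (X a, Y a)) d]
    rw [Fintype.sum_prod_type]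
    apply Finset.sum_congr rfl; intro b _
    apply Finset.sum_congr rfl; intro c _
    exact pm_map (fun a => (X a, Y a, W a)) (fun a => (W a, X a, Y a))
      (fun t => (t.2.2, t.1, t.2.1))
      (fun t t' h => by
        simp only [Prod.ext_iff] at h ⊢; tauto)
      (fun a => rfl) (b, c, d)
  have hsm : ∑ t, m t = 1 := by rw [hm, sum_pm, hp.2]
  have hsW : ∑ d, mW d = 1 := by rw [hmW, sum_pm, hp.2]
  -- the comparison measure
  set Q : β × γ × ω → ℝ := fun t => mXW (t.1, t.2.2) * mYW (t.2.1, t.2.2) / mW t.2.2 with hQ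
  have hQ0 : ∀ t, 0 ≤ Q t := fun t => by
    apply div_nonneg (mul_nonneg (hXW0 _) (hYW0 _)) (hW0 _)
  have hmle1 : ∀ b c d, m (b, c, d) ≤ mXW (b, d) := fun b c d => by
    rw [hXWm]; exact Finset.single_le_sum (f := fun c => m (b, c, d)) (fun c _ => hm0 _) (mem_univ c)
  have hmle2 : ∀ b c d, m (b, c, d) ≤ mYW (c, d) := fun b c d => by
    rw [hYWm]; exact Finset.single_le_sum (f := fun b => m (b, c, d)) (fun b _ => hm0 _) (mem_univ b)
  have hmle3 : ∀ b c d, m (b, c, d) ≤ mW d := fun b c d => by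
    rw [hWm]
    calc m (b, c, d) ≤ ∑ c : γ, m (b, c, d) :=
          Finset.single_le_sum (f := fun c => m (b, c, d)) (fun c _ => hm0 _) (mem_univ c)
      _ ≤ ∑ b : β, ∑ c : γ, m (b, c, d) :=
          Finset.single_le_sum (f := fun b => ∑ c : γ, m (b, c, d))
            (fun b _ => Finset.sum_nonneg fun c _ => hm0 _) (mem_univ b)
  have hQP : ∀ t, Q t = 0 → m t = 0 := by
    rintro ⟨b, c, d⟩ ht
    rw [hQ] at ht
    simp only [div_eq_zero_iff, mul_eq_zero] at ht
    rcases ht with (h | h) | h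
    · exact le_antisymm (h ▸ hmle1 b c d) (hm0 _)
    · exact le_antisymm (h ▸ hmle2 b c d) (hm0 _)
    · exact le_antisymm (h ▸ hmle3 b c d) (hm0 _)
  -- sum of Q equals 1
  have hXWsum : ∀ d, ∑ b : β, mXW (b, d) = mW d := by
    intro d; rw [hWm]
    exact Finset.sum_congr rfl fun b _ => hXWm b d
  have hYWsum : ∀ d, ∑ c : γ, mYW (c, d) = mW d := by
    intro d; rw [hWm, Finset.sum_comm]
    exact Finset.sum_congr rfl fun c _ => hYWm c d
  have hQsum : ∑ t, Q t ≤ ∑ t, m t := by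
    rw [hsm]
    have : ∑ t : β × γ × ω, Q t = ∑ d : ω, mW d := by
      rw [Fintype.sum_prod_type]
      simp_rw [Fintype.sum_prod_type]
      rw [Finset.sum_comm]
      have h1 : ∀ d : ω, ∑ c : γ, ∑ b : β, Q (b, c, d) = mW d := by
        intro d
        by_cases hd : mW d = 0
        · have : ∀ c b, Q (b, c, d) = 0 := by
            intro c b; rw [hQ]; simp [hd]
          simp [this, hd]
        · have : ∀ c : γ, ∑ b : β, Q (b, c, d) = mYW (c, d) * mW d / mW d := by
            intro c
            rw [hQ]
            simp only
            rw [← Finset.sum_div, ← Finset.sum_mul]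
            rw [hXWsum d]
            ring_nf
          simp_rw [this]
          rw [← Finset.sum_div, ← Finset.sum_mul, hYWsum d]
          field_simp
      calc ∑ c : γ, ∑ b : β, ∑ d : ω, Q (b, c, d)
          = ∑ c : γ, ∑ d : ω, ∑ b : β, Q (b, c, d) :=
            Finset.sum_congr rfl (fun c _ => Finset.sum_comm)
        _ = ∑ d : ω, ∑ c : γ, ∑ b : β, Q (b, c, d) := Finset.sum_comm
        _ = ∑ d : ω, mW d := Finset.sum_congr rfl (fun d _ => h1 d)
    rw [this, hsW]
  have hgibbs := gibbs m Q hm0 hQ0 hQP hQsum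
  have hpt : ∀ t : β × γ × ω, m t * Real.logb 2 (Q t) =
      m t * Real.logb 2 (mXW (t.1, t.2.2)) + m t * Real.logb 2 (mYW (t.2.1, t.2.2))
        - m t * Real.logb 2 (mW t.2.2) := by
    rintro ⟨b, c, d⟩
    by_cases h : m (b, c, d) = 0
    · simp [h]
    · have hmpos : 0 < m (b, c, d) := lt_of_le_of_ne (hm0 _) (Ne.symm h)
      have hx : 0 < mXW (b, d) := lt_of_lt_of_le hmpos (hmle1 b c d)
      have hy : 0 < mYW (c, d) := lt_of_lt_of_le hmpos (hmle2 b c d)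
      have hw : 0 < mW d := lt_of_lt_of_le hmpos (hmle3 b c d)
      rw [hQ]
      simp only
      rw [Real.logb_div (by positivity) (ne_of_gt hw),
        Real.logb_mul (ne_of_gt hx) (ne_of_gt hy)]
      ring
  have hL : ∑ t, m t * Real.logb 2 (Q t) =
      (∑ t : β × γ × ω, m t * Real.logb 2 (mXW (t.1, t.2.2)))
      + (∑ t : β × γ × ω, m t * Real.logb 2 (mYW (t.2.1, t.2.2)))
      - ∑ t : β × γ × ω, m t * Real.logb 2 (mW t.2.2) := by
    rw [← Finset.sum_add_distrib, ← Finset.sum_sub_distrib]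
    exact Finset.sum_congr rfl fun t _ => hpt t
  have hS1 : ∑ t : β × γ × ω, m t * Real.logb 2 (mXW (t.1, t.2.2))
      = ∑ t : β × ω, mXW t * Real.logb 2 (mXW t) := by
    rw [Fintype.sum_prod_type]
    simp_rw [Fintype.sum_prod_type]
    apply Finset.sum_congr rfl; intro b _
    rw [Finset.sum_comm]
    apply Finset.sum_congr rfl; intro d _
    rw [← Finset.sum_mul, ← hXWm b d]
  have hS2 : ∑ t : β × γ × ω, m t * Real.logb 2 (mYW (t.2.1, t.2.2))
      = ∑ t : γ × ω, mYW t * Real.logb 2 (mYW t) := by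
    rw [Fintype.sum_prod_type]
    simp_rw [Fintype.sum_prod_type]
    rw [Finset.sum_comm]
    apply Finset.sum_congr rfl; intro c _
    rw [Finset.sum_comm]
    apply Finset.sum_congr rfl; intro d _
    rw [← Finset.sum_mul, ← hYWm c d]
  have hS3 : ∑ t : β × γ × ω, m t * Real.logb 2 (mW t.2.2)
      = ∑ d : ω, mW d * Real.logb 2 (mW d) := by
    rw [Fintype.sum_prod_type]
    simp_rw [Fintype.sum_prod_type]
    calc ∑ b : β, ∑ c : γ, ∑ d : ω, m (b, c, d) * Real.logb 2 (mW d)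
        = ∑ b : β, ∑ d : ω, ∑ c : γ, m (b, c, d) * Real.logb 2 (mW d) :=
          Finset.sum_congr rfl (fun b _ => Finset.sum_comm)
      _ = ∑ d : ω, ∑ b : β, ∑ c : γ, m (b, c, d) * Real.logb 2 (mW d) := Finset.sum_comm
      _ = ∑ d : ω, mW d * Real.logb 2 (mW d) := by
          apply Finset.sum_congr rfl; intro d _
          simp_rw [← Finset.sum_mul]
          rw [← hWm d]
  rw [hL, hS1, hS2, hS3] at hgibbs
  have e1 : ent p (fun a => (X a, Y a, W a)) = -∑ t : β × γ × ω, m t * Real.logb 2 (m t) := by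
    rw [ent_def, ← hm]
  have e2 : ent p (fun a => (X a, W a)) = -∑ t : β × ω, mXW t * Real.logb 2 (mXW t) := by
    rw [ent_def, ← hmXW]
  have e3 : ent p (fun a => (Y a, W a)) = -∑ t : γ × ω, mYW t * Real.logb 2 (mYW t) := by
    rw [ent_def, ← hmYW]
  have e4 : ent p W = -∑ d : ω, mW d * Real.logb 2 (mW d) := by
    rw [ent_def, ← hmW]
  rw [e1, e2, e3, e4]
  linarith

lemma subadd2 (hp : IsPMF p) {β γ : Type*} [Fintype β] [Fintype γ] (X : A → β) (Y : A → γ) :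
    ent p (fun a => (X a, Y a)) ≤ ent p X + ent p Y := by
  have h := submod3 hp X Y (fun _ : A => (0 : Fin 1))
  have e0 : ent p (fun _ : A => (0 : Fin 1)) = 0 := ent_const hp _
  have e1 : ent p (fun a => (X a, Y a, (0 : Fin 1))) = ent p (fun a => (X a, Y a)) :=
    ent_congr_inj (fun a => (X a, Y a)) _ (fun q => (q.1, q.2, 0))
      (fun q q' hq => by simpa [Prod.ext_iff] using hq) (fun a => rfl)
  have e2 : ent p (fun a => (X a, (0 : Fin 1))) = ent p X :=
    ent_congr_inj X _ (fun x => (x, 0))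
      (fun q q' hq => by simpa [Prod.ext_iff] using hq) (fun a => rfl)
  have e3 : ent p (fun a => (Y a, (0 : Fin 1))) = ent p Y :=
    ent_congr_inj Y _ (fun x => (x, 0))
      (fun q q' hq => by simpa [Prod.ext_iff] using hq) (fun a => rfl)
  rw [e1, e2, e3, e0] at h
  linarith

end SRAux

namespace SRAux

open scoped Classical

variable {A : Type*} [Fintype A] {p : A → ℝ}
variable {V : Type*} [Fintype V] [DecidableEq V] {B : V → Type*} [∀ v, Fintype (B v)]
variable {γ : Type*} [Fintype γ]

variable (p) in
/-- joint entropy of `Z` together with the spins in `S` -/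
noncomputable def J (σ : ∀ v : V, A → B v) (f : (∀ v : V, B v) → γ) (S : Finset V) : ℝ :=
  ent p (fun a => (f (fun v => σ v a), fun u : {x // x ∈ S} => σ u a))

lemma J_empty (hp : IsPMF p) (σ : ∀ v : V, A → B v) (f : (∀ v : V, B v) → γ) :
    J p σ f (∅ : Finset V) = ent p (fun a => f (fun v => σ v a)) := by
  apply ent_congr_inj (p := p) (fun a => f (fun v => σ v a)) _
    (fun z => (z, fun u : {x // x ∈ (∅ : Finset V)} => absurd u.2 (Finset.notMem_empty u.1)))
  · intro z z' h
    exact congrArg Prod.fst h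
  · intro a
    refine Prod.ext rfl ?_
    funext u
    exact absurd u.2 (Finset.notMem_empty u.1)

lemma ent_pair_insert (σ : ∀ v : V, A → B v) (f : (∀ v : V, B v) → γ) (v : V) (S : Finset V) :
    ent p (fun a => (σ v a, (f (fun v => σ v a), fun u : {x // x ∈ S} => σ u a)))
      = J p σ f (insert v S) := by
  apply ent_congr_inj (p := p) _ _
    (fun zt : γ × (∀ u : {x // x ∈ insert v S}, B u) =>
      (zt.2 ⟨v, mem_insert_self v S⟩,
        (zt.1, fun u : {x // x ∈ S} => zt.2 ⟨u.1, mem_insert_of_mem u.2⟩)))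
  · rintro ⟨z, t⟩ ⟨z', t'⟩ h
    simp only [Prod.ext_iff] at h
    obtain ⟨h1, h2, h3⟩ := h
    refine Prod.ext h2 ?_
    funext u
    rcases Finset.mem_insert.1 u.2 with hv | hu
    · have : u = ⟨v, mem_insert_self v S⟩ := Subtype.ext hv
      rw [this]; exact h1
    · exact congrFun h3 ⟨u.1, hu⟩
  · intro a; rfl

lemma J_insert_le (hp : IsPMF p) (σ : ∀ v : V, A → B v) (f : (∀ v : V, B v) → γ)
    (v : V) (S : Finset V) :
    J p σ f (insert v S) ≤ ent p (σ v) + J p σ f S := by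
  rw [← ent_pair_insert (p := p) σ f v S]
  exact subadd2 hp (σ v) _

lemma J_key (hp : IsPMF p) (σ : ∀ v : V, A → B v) (f : (∀ v : V, B v) → γ)
    (v : V) {S S' : Finset V} (hSS' : S ⊆ S') :
    J p σ f (insert v S') + J p σ f S ≤ J p σ f (insert v S) + J p σ f S' := by
  have h := submod3 hp (σ v) (fun a => fun u : {x // x ∈ S' \ S} => σ u a)
    (fun a => (f (fun v => σ v a), fun u : {x // x ∈ S} => σ u a))
  have eXYW : ent p (fun a => (σ v a, (fun u : {x // x ∈ S' \ S} => σ u a),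
      (f (fun v => σ v a), fun u : {x // x ∈ S} => σ u a))) = J p σ f (insert v S') := by
    apply ent_congr_inj (p := p) _ _
      (fun zt : γ × (∀ u : {x // x ∈ insert v S'}, B u) =>
        (zt.2 ⟨v, mem_insert_self v S'⟩,
          (fun u : {x // x ∈ S' \ S} =>
              zt.2 ⟨u.1, mem_insert_of_mem (sdiff_subset u.2)⟩,
            (zt.1, fun u : {x // x ∈ S} => zt.2 ⟨u.1, mem_insert_of_mem (hSS' u.2)⟩))))
    · rintro ⟨z, t⟩ ⟨z', t'⟩ h
      simp only [Prod.ext_iff] at h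
      obtain ⟨h1, h2, h3, h4⟩ := h
      refine Prod.ext h3 ?_
      funext u
      rcases Finset.mem_insert.1 u.2 with hv | hu
      · have : u = ⟨v, mem_insert_self v S'⟩ := Subtype.ext hv
        rw [this]; exact h1
      · by_cases hs : u.1 ∈ S
        · exact congrFun h4 ⟨u.1, hs⟩
        · exact congrFun h2 ⟨u.1, Finset.mem_sdiff.2 ⟨hu, hs⟩⟩
    · intro a; rfl
  have eXW := ent_pair_insert (p := p) σ f v S
  have eYW : ent p (fun a => ((fun u : {x // x ∈ S' \ S} => σ u a),
      (f (fun v => σ v a), fun u : {x // x ∈ S} => σ u a))) = J p σ f S' := by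
    apply ent_congr_inj (p := p) _ _
      (fun zt : γ × (∀ u : {x // x ∈ S'}, B u) =>
        (fun u : {x // x ∈ S' \ S} => zt.2 ⟨u.1, sdiff_subset u.2⟩,
          (zt.1, fun u : {x // x ∈ S} => zt.2 ⟨u.1, hSS' u.2⟩)))
    · rintro ⟨z, t⟩ ⟨z', t'⟩ h
      simp only [Prod.ext_iff] at h
      obtain ⟨h1, h2, h3⟩ := h
      refine Prod.ext h2 ?_
      funext u
      by_cases hs : u.1 ∈ S
      · exact congrFun h3 ⟨u.1, hs⟩
      · exact congrFun h1 ⟨u.1, Finset.mem_sdiff.2 ⟨u.2, hs⟩⟩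
    · intro a; rfl
  rw [eXYW, eXW, eYW] at h
  exact h

lemma ent_tau_empty (hp : IsPMF p) (σ : ∀ v : V, A → B v) :
    ent p (fun a => fun u : {x // x ∈ (∅ : Finset V)} => σ u a) = 0 := by
  have hc : (fun a => fun u : {x // x ∈ (∅ : Finset V)} => σ u a)
      = fun _ : A => (fun u : {x // x ∈ (∅ : Finset V)} =>
          absurd u.2 (Finset.notMem_empty u.1) : ∀ u : {x // x ∈ (∅ : Finset V)}, B u) := by
    funext a u
    exact absurd u.2 (Finset.notMem_empty u.1)
  rw [hc]
  exact ent_const hp _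

lemma E_subadd (hp : IsPMF p) (σ : ∀ v : V, A → B v) (U : Finset V) :
    ent p (fun a => fun u : {x // x ∈ U} => σ u a) ≤ ∑ v ∈ U, ent p (σ v) := by
  classical
  induction U using Finset.induction_on with
  | empty => rw [ent_tau_empty hp σ]; simp
  | insert _ _ hvU ih =>
    rename_i v U'
    have e1 : ent p (fun a => (σ v a, fun u : {x // x ∈ U'} => σ u a))
        = ent p (fun a => fun u : {x // x ∈ insert v U'} => σ u a) := by
      apply ent_congr_inj (p := p) _ _
        (fun t : ∀ u : {x // x ∈ insert v U'}, B u =>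
          (t ⟨v, mem_insert_self v U'⟩, fun u : {x // x ∈ U'} => t ⟨u.1, mem_insert_of_mem u.2⟩))
      · intro t t' h
        simp only [Prod.ext_iff] at h
        obtain ⟨h1, h2⟩ := h
        funext u
        rcases Finset.mem_insert.1 u.2 with hv | hu
        · have : u = ⟨v, mem_insert_self v U'⟩ := Subtype.ext hv
          rw [this]; exact h1
        · exact congrFun h2 ⟨u.1, hu⟩
      · intro a; rfl
    rw [← e1, Finset.sum_insert hvU]
    calc ent p (fun a => (σ v a, fun u : {x // x ∈ U'} => σ u a))
        ≤ ent p (σ v) + ent p (fun a => fun u : {x // x ∈ U'} => σ u a) := subadd2 hp _ _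
      _ ≤ ent p (σ v) + ∑ v ∈ U', ent p (σ v) := by linarith [ih]

lemma J_univ (σ : ∀ v : V, A → B v) (f : (∀ v : V, B v) → γ) :
    J p σ f (univ : Finset V) = ent p (fun a => fun v : V => σ v a) := by
  apply ent_congr_inj (p := p) _ _
    (fun s : ∀ v : V, B v => (f s, fun u : {x // x ∈ (univ : Finset V)} => s u.1))
  · intro s s' h
    simp only [Prod.ext_iff] at h
    funext v
    exact congrFun h.2 ⟨v, mem_univ v⟩
  · intro a; rfl

end SRAux

/-- **Large entropy implies no non-degenerate random sparse reconstruction**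
(Lemma 7.2 of the paper). If the spin system `σ_V` satisfies
`H(σ_V) ≥ Σ_v H(σ_v) − C`, and `𝒰 ∼ ν` is an independent random subset with revealment at most
`δ`, then for every finitely-valued function `Z = f(σ_V)` with `H(Z) > 0`,
`Σ_U ν(U)·I(Z : σ_U) ≤ δ·(H(Z) + C)`; equivalently `E[clue^I(f|𝒰)] ≤ δ·(1 + C/H(Z))`. -/
theorem entropy_clue_bound
    {A : Type*} [Fintype A] (p : A → ℝ) (hp : IsPMF p)
    {V : Type*} [Fintype V] [DecidableEq V]
    (B : V → Type*) [∀ v, Fintype (B v)]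
    (σ : ∀ v : V, A → B v)
    (C : ℝ) (hC : 0 ≤ C)
    (hent : (∑ v : V, ent p (σ v)) - C ≤ ent p (fun a => fun v : V => σ v a))
    (ν : Finset V → ℝ) (hν0 : ∀ S, 0 ≤ ν S) (hν1 : ∑ S : Finset V, ν S = 1)
    (δ : ℝ)
    (hδ : ∀ v : V, ∑ S ∈ univ.filter (fun S : Finset V => v ∈ S), ν S ≤ δ)
    {γ : Type*} [Fintype γ]
    (f : (∀ v : V, B v) → γ)
    (hZ : 0 < ent p (fun a => f (fun v => σ v a))) :
    ∑ U : Finset V, ν U *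
        minfo p (fun a => f (fun v => σ v a)) (fun a (u : U) => σ u a)
      ≤ δ * (ent p (fun a => f (fun v => σ v a)) + C) := by
  classical
  open SRAux in
  cases isEmpty_or_nonempty V with
  | inl hV =>
    exfalso
    have hc : (fun a => f (fun v => σ v a)) = fun _ : A => f (fun v => isEmptyElim v) := by
      funext a
      congr 1
      funext v
      exact isEmptyElim v
    rw [hc, SRAux.ent_const hp] at hZ
    exact lt_irrefl 0 hZ
  | inr hV =>
    set n := Fintype.card V with hn
    set e := Fintype.equivFin V with he
    set r : V → ℕ := fun v => (e v : ℕ) with hr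
    have hr_inj : Function.Injective r := fun v w h => e.injective (Fin.ext h)
    have hr_lt : ∀ v, r v < n := fun v => (e v).2
    set T : V → Finset V := fun v => univ.filter (fun w => r w < r v) with hT
    set c : V → ℝ := fun v => J p σ f (insert v (T v)) - J p σ f (T v) with hc
    set aa : V → ℝ := fun v => ent p (σ v) - c v with haa
    have ha0 : ∀ v, 0 ≤ aa v := by
      intro v
      have h := J_insert_le hp σ f v (T v)
      simp only [haa, hc]
      linarith
    have P1 : ∀ U : Finset V, ent p (fun a => f (fun v => σ v a)) + ∑ v ∈ U, c v
        ≤ J p σ f U := by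
      intro U
      induction U using Finset.strongInduction with
      | _ U ih =>
        rcases U.eq_empty_or_nonempty with rfl | hne
        · rw [J_empty hp σ f]; simp
        · obtain ⟨v, hvU, hmax⟩ := Finset.exists_max_image U r hne
          have herase : U.erase v ⊂ U := Finset.erase_ssubset hvU
          have hsub : U.erase v ⊆ T v := by
            intro w hw
            obtain ⟨hwv, hwU⟩ := Finset.mem_erase.1 hw
            simp only [hT, mem_filter, mem_univ, true_and]
            exact lt_of_le_of_ne (hmax w hwU) (fun h => hwv (hr_inj h))
          have hk := J_key hp σ f v hsub
          rw [Finset.insert_erase hvU] at hk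
          have ih' := ih _ herase
          have hsumsplit : ∑ v' ∈ U.erase v, c v' + c v = ∑ v' ∈ U, c v' :=
            Finset.sum_erase_add U c hvU
          simp only [hc] at hk ih' hsumsplit ⊢
          linarith
    have P3 : J p σ f (univ : Finset V)
        = ent p (fun a => f (fun v => σ v a)) + ∑ v : V, c v := by
      have key : ∀ k : ℕ, k ≤ n → J p σ f (univ.filter (fun w => r w < k))
          = ent p (fun a => f (fun v => σ v a)) + ∑ v ∈ univ.filter (fun w => r w < k), c v := by
        intro k
        induction k with
        | zero =>
          intro _
          have h0 : univ.filter (fun w : V => r w < 0) = ∅ := by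
            apply Finset.filter_false_of_mem
            intro w _
            exact Nat.not_lt_zero _
          rw [h0, J_empty hp σ f]
          simp
        | succ k ihk =>
          intro hk1
          have hk : k < n := hk1
          set v := e.symm ⟨k, hk⟩ with hv
          have hrv : r v = k := by simp [hr, hv]
          have hPk : univ.filter (fun w : V => r w < k + 1)
              = insert v (univ.filter (fun w : V => r w < k)) := by
            ext w
            simp only [mem_filter, mem_univ, true_and, Finset.mem_insert]
            rw [Nat.lt_succ_iff_lt_or_eq]
            constructor
            · rintro (h | h)
              · exact Or.inr h
              · exact Or.inl (hr_inj (h.trans hrv.symm))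
            · rintro (h | h)
              · exact Or.inr (h ▸ hrv)
              · exact Or.inl h
          have hTv : T v = univ.filter (fun w : V => r w < k) := by
            simp only [hT, hrv]
          have hvnot : v ∉ univ.filter (fun w : V => r w < k) := by
            simp [hrv]
          have ihk' := ihk (le_of_lt hk)
          rw [hPk, Finset.sum_insert hvnot, ← hTv] at *
          rw [← hTv] at ihk'
          simp only [hc]
          linarith [ihk']
      have huniv : univ.filter (fun w : V => r w < n) = univ := by
        apply Finset.filter_true_of_mem
        intro w _
        exact hr_lt w
      have := key n (le_refl n)
      rwa [huniv] at this
    have hsuma : ∑ v : V, aa v ≤ ent p (fun a => f (fun v => σ v a)) + C := by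
      have hJu : J p σ f (univ : Finset V) = ent p (fun a => fun v : V => σ v a) := J_univ σ f
      simp only [haa]
      rw [Finset.sum_sub_distrib]
      have hcs : ∑ v : V, c v
          = J p σ f (univ : Finset V) - ent p (fun a => f (fun v => σ v a)) := by
        linarith [P3]
      rw [hcs, hJu]
      linarith [hent]
    have hperU : ∀ U : Finset V,
        minfo p (fun a => f (fun v => σ v a)) (fun a (u : U) => σ u a) ≤ ∑ v ∈ U, aa v := by
      intro U
      have h1 : minfo p (fun a => f (fun v => σ v a)) (fun a (u : U) => σ u a)
          = ent p (fun a => f (fun v => σ v a))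
            + ent p (fun a => fun u : {x // x ∈ U} => σ u a) - J p σ f U := rfl
      have h2 := E_subadd hp σ U
      have h3 := P1 U
      rw [h1]
      simp only [haa]
      rw [Finset.sum_sub_distrib]
      linarith
    have hδ0 : 0 ≤ δ := by
      obtain ⟨v⟩ := hV
      exact le_trans (Finset.sum_nonneg fun S _ => hν0 S) (hδ v)
    calc ∑ U : Finset V, ν U *
            minfo p (fun a => f (fun v => σ v a)) (fun a (u : U) => σ u a)
        ≤ ∑ U : Finset V, ν U * ∑ v ∈ U, aa v := by
          apply Finset.sum_le_sum
          intro U _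
          exact mul_le_mul_of_nonneg_left (hperU U) (hν0 U)
      _ = ∑ U : Finset V, ∑ v : V, (if v ∈ U then ν U * aa v else 0) := by
          apply Finset.sum_congr rfl
          intro U _
          rw [Finset.mul_sum]
          rw [Finset.sum_ite_mem univ U (fun v => ν U * aa v), Finset.univ_inter]
      _ = ∑ v : V, (∑ U ∈ univ.filter (fun S : Finset V => v ∈ S), ν U) * aa v := by
          rw [Finset.sum_comm]
          apply Finset.sum_congr rfl
          intro v _
          rw [Finset.sum_mul, Finset.sum_filter]
      _ ≤ ∑ v : V, δ * aa v := by
          apply Finset.sum_le_sum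
          intro v _
          exact mul_le_mul_of_nonneg_right (hδ v) (ha0 v)
      _ = δ * ∑ v : V, aa v := by rw [Finset.mul_sum]
      _ ≤ δ * (ent p (fun a => f (fun v => σ v a)) + C) :=
          mul_le_mul_of_nonneg_left hsuma hδ0
end
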